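/- arXiv:math/0405222 — 10 statements merged into one kernel-verified Lean document; each statement's English description precedes it below -/
import Mathlib

section
/- A complex number λ with λ ∉ {x_1,…,x_N} is an eigenvalue of the matrix L_N if and only if φ(λ) = 0; moreover, every eigenvalue of L_N (over ℂ) lies outside {x_1,…,x_N}, so the spectrum of L_N is exactly the zero set of φ. -/
/-- Fix `N ≥ 2` and distinct positive reals `x 1, …, x N`, and let `L` be the
generator of Bouchaud's REM-like trap model on the complete graph, i.e. the `N × N` real matrix
with `L i i = ((N-1)/N) * x i` and `L i j = -(x i)/N` for `i ≠ j`.  Let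
`φ λ = ∑ j, λ / (x j - λ)`.  Then a complex number `λ` outside `{x 1, …, x N}` is an eigenvalue
of `L` (viewed as a complex matrix) iff `φ λ = 0`; moreover every eigenvalue of `L` over `ℂ`
lies outside `{x 1, …, x N}`, so the spectrum of `L` is exactly the zero set of `φ`. -/
theorem rem_trap_spectrum_eq_zero_set_of_phi
    (N : ℕ) (hN : 2 ≤ N) (x : Fin N → ℝ)
    (hx_pos : ∀ i, 0 < x i) (hx_inj : Function.Injective x)
    (L : Matrix (Fin N) (Fin N) ℝ)
    (hL : ∀ i j, L i j = if i = j then ((N - 1 : ℝ) / N) * x i else -(x i) / N)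
    (φ : ℂ → ℂ)
    (hφ : ∀ l : ℂ, φ l = ∑ j : Fin N, l / ((x j : ℂ) - l)) :
    (∀ l : ℂ, l ∉ Set.range (fun i : Fin N => ((x i : ℝ) : ℂ)) →
        (l ∈ spectrum ℂ (L.map (fun r : ℝ => (r : ℂ))) ↔ φ l = 0)) ∧
    (∀ l : ℂ, l ∈ spectrum ℂ (L.map (fun r : ℝ => (r : ℂ))) →
        l ∉ Set.range (fun i : Fin N => ((x i : ℝ) : ℂ))) := by
  have hN0 : (N : ℂ) ≠ 0 := Nat.cast_ne_zero.mpr (by omega)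
  have hx0 : ∀ i, (x i : ℂ) ≠ 0 := fun i => by
    exact_mod_cast (hx_pos i).ne'
  set M := L.map (fun r : ℝ => (r : ℂ)) with hM
  -- entries of the matrix `l • 1 - M`
  have hB : ∀ (l : ℂ) (i j : Fin N),
      (algebraMap ℂ (Matrix (Fin N) (Fin N) ℂ) l - M) i j
        = (if i = j then l - (x i : ℂ) else 0) + (x i : ℂ) / N := by
    intro l i j
    simp only [Matrix.sub_apply, Matrix.algebraMap_matrix_apply, hM, Matrix.map_apply, hL]
    by_cases h : i = j <;> simp [h] <;> push_cast <;> field_simp <;> ring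
  -- mulVec formula
  have hmul : ∀ (l : ℂ) (v : Fin N → ℂ) (i : Fin N),
      ((algebraMap ℂ (Matrix (Fin N) (Fin N) ℂ) l - M).mulVec v) i
        = (l - (x i : ℂ)) * v i + ((x i : ℂ) / N) * ∑ j, v j := by
    intro l v i
    simp only [Matrix.mulVec, dotProduct, hB, add_mul, Finset.sum_add_distrib,
      ite_mul, zero_mul, Finset.sum_ite_eq, Finset.mem_univ, if_true, Finset.mul_sum]
  -- spectrum criterion
  have hspec : ∀ l : ℂ, l ∈ spectrum ℂ M ↔
      ∃ v ≠ 0, (algebraMap ℂ (Matrix (Fin N) (Fin N) ℂ) l - M).mulVec v = 0 := by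
    intro l
    rw [spectrum.mem_iff, Matrix.isUnit_iff_isUnit_det, isUnit_iff_ne_zero, not_not,
      ← Matrix.exists_mulVec_eq_zero_iff]
  -- Part 2: the x i are never eigenvalues
  have part2 : ∀ l : ℂ, l ∈ spectrum ℂ M →
      l ∉ Set.range (fun i : Fin N => ((x i : ℝ) : ℂ)) := by
    intro l hl hran
    obtain ⟨k, hk⟩ := hran
    obtain ⟨v, hv0, hv⟩ := (hspec l).mp hl
    subst hk
    set s := ∑ j, v j with hs
    have heqk := congrFun hv k
    rw [hmul] at heqk
    simp only [Pi.zero_apply, sub_self, zero_mul, zero_add] at heqk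
    have hs0 : s = 0 := by
      rcases mul_eq_zero.mp heqk with h | h
      · exact absurd h (div_ne_zero (hx0 k) hN0)
      · exact h
    have hvz : ∀ i, v i = 0 := by
      intro i
      by_cases hik : i = k
      · subst hik
        have : ∀ j, j ≠ i → v j = 0 := by
          intro j hj
          have heqj := congrFun hv j
          rw [hmul] at heqj
          simp only [Pi.zero_apply, ← hs, hs0, mul_zero, add_zero] at heqj
          have hne : ((x i : ℝ) : ℂ) - (x j : ℂ) ≠ 0 := by
            rw [sub_ne_zero]
            exact_mod_cast fun h => hj (hx_inj (by exact_mod_cast h.symm))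
          exact (mul_eq_zero.mp heqj).resolve_left hne
        have : s = v i := by
          rw [hs, Finset.sum_eq_single i (fun j _ hj => this j hj) (by simp)]
        rw [hs0] at this; exact this.symm
      · have heqi := congrFun hv i
        rw [hmul] at heqi
        simp only [Pi.zero_apply, ← hs, hs0, mul_zero, add_zero] at heqi
        have hne : ((x k : ℝ) : ℂ) - (x i : ℂ) ≠ 0 := by
          rw [sub_ne_zero]
          exact_mod_cast fun h => hik (hx_inj (by exact_mod_cast h.symm))
        exact (mul_eq_zero.mp heqi).resolve_left hne
    exact hv0 (funext hvz)
  refine ⟨?_, part2⟩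
  intro l hl
  have hne : ∀ i, (x i : ℂ) - l ≠ 0 := by
    intro i h
    exact hl ⟨i, by rw [sub_eq_zero] at h; exact h⟩
  constructor
  · -- eigenvalue → φ l = 0
    intro hmem
    obtain ⟨v, hv0, hv⟩ := (hspec l).mp hmem
    set s := ∑ j, v j with hs
    have hveq : ∀ i, v i = (x i : ℂ) / N * s / ((x i : ℂ) - l) := by
      intro i
      have heqi := congrFun hv i
      rw [hmul] at heqi
      simp only [Pi.zero_apply, ← hs] at heqi
      rw [eq_div_iff (hne i)]
      linear_combination -heqi
    have hsne : s ≠ 0 := by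
      intro h0
      apply hv0
      funext i
      rw [hveq i, h0, mul_zero, zero_div]
      rfl
    have hsum : s = s / N * ∑ i, (x i : ℂ) / ((x i : ℂ) - l) := by
      rw [hs]
      nth_rewrite 1 [Finset.sum_congr rfl (fun i _ => hveq i)]
      rw [Finset.mul_sum]
      congr 1
      ext i
      field_simp
      ring
    have hxsum : ∑ i, (x i : ℂ) / ((x i : ℂ) - l) = N + φ l := by
      rw [hφ l, show ((N : ℕ) : ℂ) = ∑ _i : Fin N, (1 : ℂ) by simp, ← Finset.sum_add_distrib]
      refine Finset.sum_congr rfl fun i _ => ?_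
      field_simp [hne i]
      ring
    rw [hxsum] at hsum
    have h3 : s * φ l = 0 := by
      have := hsum
      rw [div_mul_eq_mul_div, eq_div_iff hN0] at this
      linear_combination -this
    exact (mul_eq_zero.mp h3).resolve_left hsne
  · -- φ l = 0 → eigenvalue
    intro hphi
    apply (hspec l).mpr
    refine ⟨fun i => (x i : ℂ) / ((x i : ℂ) - l), ?_, ?_⟩
    · intro h
      have h0 := congrFun h ⟨0, by omega⟩
      simp only [Pi.zero_apply, div_eq_zero_iff] at h0
      rcases h0 with h0 | h0
      · exact hx0 _ h0
      · exact hne _ h0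
    · funext i
      show _ = (0 : ℂ)
      rw [hmul]
      have hsum : ∑ j, (x j : ℂ) / ((x j : ℂ) - l) = N := by
        have : ∀ j : Fin N, (x j : ℂ) / ((x j : ℂ) - l) = 1 + l / ((x j : ℂ) - l) := by
          intro j; field_simp [hne j]; ring
        rw [Finset.sum_congr rfl (fun j _ => this j), Finset.sum_add_distrib, ← hφ l, hphi]
        simp
      rw [hsum]
      field_simp [hne i]
      ring
end

section
/- If the labels are chosen so that x_1 < x_2 < … < x_N, then L_N has exactly N eigenvalues, all real and simple, 0 = λ_1 < λ_2 < … < λ_N, and they interlace the x_i: for every i = 2, …, N one has x_{i−1} < λ_i < x_i. Equivalently, φ has exactly N zeros in ℂ, namely λ_1 = 0 and exactly one zero in each open interval (x_{i−1}, x_i) for i = 2, …, N. -/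
open Polynomial Finset

namespace RemTrapAux

variable {N : ℕ}

noncomputable def Qc (N : ℕ) (x : Fin N → ℝ) : Polynomial ℂ :=
  (∏ j : Fin N, (X - C (x j : ℂ))) +
    C (N : ℂ)⁻¹ * ∑ j : Fin N, C (x j : ℂ) * ∏ k ∈ univ.erase j, (X - C (x k : ℂ))

lemma evalQc (x : Fin N → ℝ) (z : ℂ) :
    (Qc N x).eval z = (∏ j, (z - (x j : ℂ))) +
      (N : ℂ)⁻¹ * ∑ j, (x j : ℂ) * ∏ k ∈ univ.erase j, (z - (x k : ℂ)) := by
  simp [Qc, eval_prod, eval_finset_sum]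

lemma evalQc' (x : Fin N → ℝ) (hN : (N : ℂ) ≠ 0) (z : ℂ) :
    (Qc N x).eval z = (N : ℂ)⁻¹ * ∑ j, z * ∏ k ∈ univ.erase j, (z - (x k : ℂ)) := by
  rw [evalQc]
  have key : ∑ j, z * ∏ k ∈ univ.erase j, (z - (x k : ℂ))
      = (N : ℂ) * (∏ j, (z - (x j : ℂ)))
        + ∑ j, (x j : ℂ) * ∏ k ∈ univ.erase j, (z - (x k : ℂ)) := by
    have : ∀ j : Fin N, z * ∏ k ∈ univ.erase j, (z - (x k : ℂ))
        = (∏ j, (z - (x j : ℂ))) + (x j : ℂ) * ∏ k ∈ univ.erase j, (z - (x k : ℂ)) := by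
      intro j
      rw [← Finset.mul_prod_erase univ _ (mem_univ j)]
      ring
    rw [Finset.sum_congr rfl fun j _ => this j, Finset.sum_add_distrib, Finset.sum_const]
    simp [Finset.card_univ]
  rw [key, mul_add, ← mul_assoc, inv_mul_cancel₀ hN, one_mul]


noncomputable def gfun (N : ℕ) (x : Fin N → ℝ) (t : ℝ) : ℝ :=
  (∏ j, (t - x j)) + (N : ℝ)⁻¹ * ∑ j, x j * ∏ k ∈ univ.erase j, (t - x k)

lemma gfun_cast (x : Fin N → ℝ) (t : ℝ) :
    ((gfun N x t : ℝ) : ℂ) = (Qc N x).eval (t : ℂ) := by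
  rw [evalQc, gfun]
  push_cast
  ring

lemma gfun_continuous (x : Fin N → ℝ) : Continuous (gfun N x) := by
  apply Continuous.add
  · exact continuous_finset_prod _ fun j _ => continuous_id.sub continuous_const
  · exact continuous_const.mul (continuous_finset_sum _ fun j _ =>
      continuous_const.mul (continuous_finset_prod _ fun k _ => continuous_id.sub continuous_const))

lemma gfun_zero (x : Fin N → ℝ) (hN : (N : ℝ) ≠ 0) : gfun N x 0 = 0 := by
  rw [gfun]
  have h : ∀ j : Fin N, x j * ∏ k ∈ univ.erase j, ((0:ℝ) - x k) = -∏ k, ((0:ℝ) - x k) := by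
    intro j
    rw [← Finset.mul_prod_erase univ _ (mem_univ j)]
    ring
  rw [Finset.sum_congr rfl fun j _ => h j, Finset.sum_const]
  simp [Finset.card_univ]
  field_simp
  ring

lemma gfun_at_x (x : Fin N → ℝ) (m : Fin N) :
    gfun N x (x m) = (N : ℝ)⁻¹ * (x m * ∏ k ∈ univ.erase m, (x m - x k)) := by
  rw [gfun]
  rw [Finset.prod_eq_zero (mem_univ m) (sub_self (x m))]
  rw [Finset.sum_eq_single m]
  · ring
  · intro j _ hj
    rw [Finset.prod_eq_zero (Finset.mem_erase.mpr ⟨hj.symm, mem_univ m⟩) (sub_self (x m)), mul_zero]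
  · intro h; exact absurd (mem_univ m) h

lemma exists_root (hN : 2 ≤ N) (x : Fin N → ℝ) (hx_pos : ∀ i, 0 < x i)
    (hx_mono : StrictMono x) (i : Fin N) (hi : 0 < i.val) :
    ∃ t ∈ Set.Ioo (x ⟨i.val - 1, Nat.lt_of_le_of_lt (Nat.sub_le _ _) i.isLt⟩) (x i),
      gfun N x t = 0 := by
  set m : Fin N := ⟨i.val - 1, Nat.lt_of_le_of_lt (Nat.sub_le _ _) i.isLt⟩ with hm
  have hmval : m.val = i.val - 1 := rfl
  have hmi : m ≠ i := by
    intro h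
    have := congrArg Fin.val h
    omega
  have hmlt : x m < x i := hx_mono (by rw [Fin.lt_def, hmval]; omega)
  have hNpos : (0:ℝ) < (N:ℝ)⁻¹ := by
    have h0 : (0:ℝ) < N := by exact_mod_cast Nat.lt_of_lt_of_le Nat.zero_lt_two hN
    exact inv_pos.mpr h0
  -- product sign
  have hiconem : i ∈ univ.erase m := Finset.mem_erase.mpr ⟨hmi.symm, mem_univ i⟩
  have hmconei : m ∈ univ.erase i := Finset.mem_erase.mpr ⟨hmi, mem_univ m⟩
  have hP : (∏ k ∈ univ.erase m, (x m - x k)) * (∏ k ∈ univ.erase i, (x i - x k)) < 0 := by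
    rw [← Finset.mul_prod_erase _ _ hiconem, ← Finset.mul_prod_erase _ _ hmconei]
    have hsets : ((univ : Finset (Fin N)).erase i).erase m = (univ.erase m).erase i := by
      ext k; simp [Finset.mem_erase]; tauto
    rw [hsets]
    have hpos : 0 < ∏ k ∈ (univ.erase m).erase i, ((x m - x k) * (x i - x k)) := by
      apply Finset.prod_pos
      intro k hk
      have hk1 : k ≠ i := (Finset.mem_erase.mp hk).1
      have hk2 : k ≠ m := (Finset.mem_erase.mp (Finset.mem_erase.mp hk).2).1
      have hkv : k.val < i.val - 1 ∨ i.val < k.val := by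
        have h1 : k.val ≠ i.val := fun h => hk1 (Fin.ext h)
        have h2 : k.val ≠ i.val - 1 := fun h => hk2 (Fin.ext (by simp [hm, h]))
        omega
      rcases hkv with h | h
      · have hkm : x k < x m := hx_mono (show k < m by rw [Fin.lt_def, hmval]; omega)
        have hki : x k < x i := hx_mono (show k < i by rw [Fin.lt_def]; omega)
        exact mul_pos (by linarith) (by linarith)
      · have hkm : x m < x k := hx_mono (show m < k by rw [Fin.lt_def, hmval]; omega)
        have hki : x i < x k := hx_mono (show i < k by rw [Fin.lt_def]; omega)
        exact mul_pos_of_neg_of_neg (by linarith) (by linarith)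
    rw [Finset.prod_mul_distrib] at hpos
    set A := ∏ k ∈ (univ.erase m).erase i, (x m - x k) with hA
    set B := ∏ k ∈ (univ.erase m).erase i, (x i - x k) with hB
    nlinarith [hpos, mul_pos (mul_pos (sub_pos.mpr hmlt) (sub_pos.mpr hmlt)) hpos]
  have hab : gfun N x (x m) * gfun N x (x i) < 0 := by
    rw [gfun_at_x, gfun_at_x]
    have h1 : 0 < x m := hx_pos m
    have h2 : 0 < x i := hx_pos i
    have hc : 0 < (N:ℝ)⁻¹ * x m * ((N:ℝ)⁻¹ * x i) := by positivity
    nlinarith [hP, hc]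
  have hcont : ContinuousOn (gfun N x) (Set.Icc (x m) (x i)) :=
    (gfun_continuous x).continuousOn
  rcases mul_neg_iff.mp hab with ⟨hga, hgb⟩ | ⟨hga, hgb⟩
  · -- gfun at x m > 0 > gfun at x i
    have := intermediate_value_Ioo' (le_of_lt hmlt) hcont
    have h0 : (0:ℝ) ∈ Set.Ioo (gfun N x (x i)) (gfun N x (x m)) := ⟨hgb, hga⟩
    obtain ⟨t, ht, hgt⟩ := this h0
    exact ⟨t, ht, hgt⟩
  · have := intermediate_value_Ioo (le_of_lt hmlt) hcont
    have h0 : (0:ℝ) ∈ Set.Ioo (gfun N x (x m)) (gfun N x (x i)) := ⟨hga, hgb⟩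
    obtain ⟨t, ht, hgt⟩ := this h0
    exact ⟨t, ht, hgt⟩

lemma eval_charpoly' {n : Type*} [DecidableEq n] [Fintype n] (M : Matrix n n ℂ) (z : ℂ) :
    M.charpoly.eval z = (Matrix.diagonal (fun _ => z) - M).det := by
  rw [Matrix.charpoly, ← Polynomial.coe_evalRingHom, RingHom.map_det]
  congr 1
  ext i j
  by_cases hij : i = j
  · subst hij
    simp [Matrix.charmatrix_apply_eq, Matrix.diagonal]
  · simp [Matrix.charmatrix_apply_ne _ _ _ hij, Matrix.diagonal_apply_ne _ hij, Matrix.sub_apply,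
      Matrix.one_apply_ne hij]

lemma mem_spectrum_iff' {n : Type*} [DecidableEq n] [Fintype n] [Nonempty n]
    (M : Matrix n n ℂ) (z : ℂ) :
    z ∈ spectrum ℂ M ↔ M.charpoly.eval z = 0 := by
  rw [spectrum.mem_iff, Matrix.isUnit_iff_isUnit_det, isUnit_iff_ne_zero, not_not,
    eval_charpoly']
  congr! 2

lemma det_id (hN : 2 ≤ N) (x : Fin N → ℝ) (L : Matrix (Fin N) (Fin N) ℝ)
    (hL : ∀ i j, L i j = if i = j then ((N - 1 : ℝ) / N) * x i else -(x i) / N)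
    (z : ℂ) (h : ∀ j, z ≠ (x j : ℂ)) :
    (Matrix.diagonal (fun _ => z) - L.map (fun r : ℝ => (r : ℂ))).det = (Qc N x).eval z := by
  have hNC : (N : ℂ) ≠ 0 := Nat.cast_ne_zero.mpr (by omega)
  set d : Fin N → ℂ := fun j => z - (x j : ℂ) with hd
  have hdne : ∀ j, d j ≠ 0 := fun j => sub_ne_zero.mpr (h j)
  have hM : Matrix.diagonal (fun _ => z) - L.map (fun r : ℝ => (r : ℂ))
      = Matrix.diagonal d + Matrix.replicateCol Unit (fun j => (x j : ℂ) / N) *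
          Matrix.replicateRow Unit (fun _ => (1:ℂ)) := by
    ext i j
    by_cases hij : i = j
    · subst hij
      simp only [Matrix.sub_apply, Matrix.add_apply, Matrix.diagonal_apply_eq, Matrix.map_apply,
        hL i i, if_pos rfl, Matrix.mul_apply, Finset.univ_unique, Finset.sum_singleton,
        Matrix.replicateCol_apply, Matrix.replicateRow_apply, hd]
      push_cast
      field_simp
      ring
    · simp only [Matrix.sub_apply, Matrix.add_apply, Matrix.diagonal_apply_ne _ hij,
        Matrix.map_apply, hL i j, if_neg hij, Matrix.mul_apply, Finset.univ_unique,
        Finset.sum_singleton, Matrix.replicateCol_apply, Matrix.replicateRow_apply]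
      push_cast
      ring
  have hA : IsUnit (Matrix.diagonal d).det := by
    rw [Matrix.det_diagonal]
    exact isUnit_iff_ne_zero.mpr (Finset.prod_ne_zero_iff.mpr fun j _ => hdne j)
  rw [hM, Matrix.det_add_replicateCol_mul_replicateRow hA]
  rw [Matrix.det_diagonal, Matrix.det_unique]
  have hinv : (Matrix.diagonal d)⁻¹ = Matrix.diagonal (fun j => (d j)⁻¹) := by
    apply Matrix.inv_eq_right_inv
    rw [Matrix.diagonal_mul_diagonal]
    have : (fun j => d j * (d j)⁻¹) = fun _ : Fin N => (1:ℂ) := by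
      funext j; exact mul_inv_cancel₀ (hdne j)
    rw [this, Matrix.diagonal_one]
  rw [hinv]
  have hentry : ((1 + (Matrix.replicateRow Unit (fun _ => (1:ℂ)) : Matrix Unit (Fin N) ℂ) * Matrix.diagonal (fun j => (d j)⁻¹) *
      Matrix.replicateCol Unit (fun j => (x j : ℂ) / N) : Matrix Unit Unit ℂ)) default default
      = 1 + ∑ j, (d j)⁻¹ * ((x j : ℂ) / N) := by
    simp [Matrix.add_apply, Matrix.mul_apply, Matrix.replicateRow_apply, Matrix.replicateCol_apply,
      Matrix.diagonal, Finset.mul_sum]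
  rw [hentry, evalQc]
  rw [mul_add, mul_one, Finset.mul_sum]
  congr 1
  rw [Finset.mul_sum]
  apply Finset.sum_congr rfl
  intro j _
  rw [← Finset.mul_prod_erase univ d (mem_univ j)]
  field_simp [hdne j]
  ring

lemma phi_relation (x : Fin N → ℝ) (hNC : (N : ℂ) ≠ 0) (z : ℂ) (h : ∀ j, z ≠ (x j : ℂ)) :
    (Qc N x).eval z
      = -(N : ℂ)⁻¹ * (∑ j, z / ((x j : ℂ) - z)) * ∏ j, (z - (x j : ℂ)) := by
  rw [evalQc' x hNC]
  have hterm : ∀ j : Fin N, z * ∏ k ∈ univ.erase j, (z - (x k : ℂ))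
      = -(z / ((x j : ℂ) - z)) * ∏ k, (z - (x k : ℂ)) := by
    intro j
    have h1 : (x j : ℂ) - z ≠ 0 := sub_ne_zero.mpr (Ne.symm (h j))
    rw [← Finset.mul_prod_erase univ _ (mem_univ j)]
    field_simp
    ring
  rw [Finset.sum_congr rfl fun j _ => hterm j, ← Finset.sum_mul, Finset.sum_neg_distrib]
  ring

end RemTrapAux

open RemTrapAux


/-- If the distinct positive reals are labelled increasingly,
`x 0 < x 1 < … < x (N-1)`, then the trap-model generator `L` has exactly `N` eigenvalues,
all real and simple, `0 = λ 0 < λ 1 < … < λ (N-1)`, which interlace the `x i`: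
`x (i-1) < λ i < x i` for every `i ≥ 1`.  Equivalently, `φ` has exactly `N` zeros in `ℂ`,
namely `λ 0 = 0` and exactly one zero in each interval `(x (i-1), x i)`. -/
theorem rem_trap_eigenvalues_real_simple_interlacing
    (N : ℕ) (hN : 2 ≤ N) (x : Fin N → ℝ)
    (hx_pos : ∀ i, 0 < x i) (hx_mono : StrictMono x)
    (L : Matrix (Fin N) (Fin N) ℝ)
    (hL : ∀ i j, L i j = if i = j then ((N - 1 : ℝ) / N) * x i else -(x i) / N)
    (φ : ℂ → ℂ)
    (hφ : ∀ l : ℂ, φ l = ∑ j : Fin N, l / ((x j : ℂ) - l)) :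
    ∃ lam : Fin N → ℝ,
      StrictMono lam ∧
      lam ⟨0, by omega⟩ = 0 ∧
      (∀ i : Fin N, 0 < i.val →
        x ⟨i.val - 1, Nat.lt_of_le_of_lt (Nat.sub_le _ _) i.isLt⟩ < lam i ∧ lam i < x i) ∧
      spectrum ℂ (L.map (fun r : ℝ => (r : ℂ))) =
        Set.range (fun i : Fin N => ((lam i : ℝ) : ℂ)) ∧
      (∀ i : Fin N,
        (Matrix.charpoly (L.map (fun r : ℝ => (r : ℂ)))).rootMultiplicity
          ((lam i : ℝ) : ℂ) = 1) ∧
      {l : ℂ | l ∉ Set.range (fun i : Fin N => ((x i : ℝ) : ℂ)) ∧ φ l = 0} =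
        Set.range (fun i : Fin N => ((lam i : ℝ) : ℂ)) := by
  classical
  haveI : Nonempty (Fin N) := ⟨⟨0, by omega⟩⟩
  have hN0 : (N : ℝ) ≠ 0 := Nat.cast_ne_zero.mpr (by omega)
  have hNC : (N : ℂ) ≠ 0 := Nat.cast_ne_zero.mpr (by omega)
  have hroot := fun (i : Fin N) (hi : 0 < i.val) =>
    RemTrapAux.exists_root hN x hx_pos hx_mono i hi
  choose f hf1 hf2 using hroot
  set lam : Fin N → ℝ := fun i => if h : 0 < i.val then f i h else 0 with hlam
  have hlam0 : ∀ i : Fin N, i.val = 0 → lam i = 0 := by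
    intro i h; simp only [hlam]; rw [dif_neg (by omega)]
  have hlam_mem : ∀ (i : Fin N) (h : 0 < i.val),
      lam i ∈ Set.Ioo (x ⟨i.val - 1, Nat.lt_of_le_of_lt (Nat.sub_le _ _) i.isLt⟩) (x i) := by
    intro i h; simp only [hlam]; rw [dif_pos h]; exact hf1 i h
  have hg : ∀ i : Fin N, gfun N x (lam i) = 0 := by
    intro i
    by_cases h : 0 < i.val
    · simp only [hlam]; rw [dif_pos h]; exact hf2 i h
    · rw [hlam0 i (by omega)]; exact gfun_zero x hN0
  have hmono : StrictMono lam := by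
    intro i j hij
    have hij' : i.val < j.val := hij
    have hjpos : 0 < j.val := by omega
    have hxj : x ⟨j.val - 1, Nat.lt_of_le_of_lt (Nat.sub_le _ _) j.isLt⟩ < lam j :=
      (hlam_mem j hjpos).1
    by_cases h : 0 < i.val
    · have h1 : lam i < x i := (hlam_mem i h).2
      have h2 : x i ≤ x ⟨j.val - 1, Nat.lt_of_le_of_lt (Nat.sub_le _ _) j.isLt⟩ :=
        hx_mono.monotone (by rw [Fin.le_def]; simp; omega)
      linarith
    · rw [hlam0 i (by omega)]
      have := hx_pos (⟨j.val - 1, Nat.lt_of_le_of_lt (Nat.sub_le _ _) j.isLt⟩ : Fin N)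
      linarith
  have hlam_ne : ∀ i j : Fin N, lam i ≠ x j := by
    intro i j
    by_cases h : 0 < i.val
    · obtain ⟨h1, h2⟩ := hlam_mem i h
      rcases lt_or_ge j.val i.val with hj | hj
      · have hle : x j ≤ x ⟨i.val - 1, Nat.lt_of_le_of_lt (Nat.sub_le _ _) i.isLt⟩ :=
          hx_mono.monotone (by rw [Fin.le_def]; simp; omega)
        intro he; rw [he] at h1; linarith
      · have hle : x i ≤ x j := hx_mono.monotone (by rw [Fin.le_def]; omega)
        intro he; rw [he] at h2; linarith
    · rw [hlam0 i (by omega)]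
      exact (hx_pos j).ne
  set Lc := L.map (fun r : ℝ => (r : ℂ)) with hLc
  have hcp : Lc.charpoly = Qc N x := by
    apply Polynomial.eq_of_infinite_eval_eq
    refine ((Set.finite_range (fun j : Fin N => ((x j : ℝ) : ℂ))).infinite_compl).mono ?_
    intro z hz
    simp only [Set.mem_compl_iff, Set.mem_range, not_exists] at hz
    have hz' : ∀ j, z ≠ (x j : ℂ) := fun j he => hz j he.symm
    show Lc.charpoly.eval z = (Qc N x).eval z
    rw [eval_charpoly', det_id hN x L hL z hz']
  have hR0 : Lc.charpoly ≠ 0 := (Matrix.charpoly_monic Lc).ne_zero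
  have hdeg : Lc.charpoly.natDegree = N := by
    rw [Matrix.charpoly_natDegree_eq_dim]; exact Fintype.card_fin N
  set lamC : Fin N → ℂ := fun i => ((lam i : ℝ) : ℂ) with hlamC
  have hinj : Function.Injective lamC := by
    intro a b hab
    exact hmono.injective (Complex.ofReal_injective hab)
  have hroots_eval : ∀ i, Lc.charpoly.eval (lamC i) = 0 := by
    intro i
    rw [hcp]
    have := gfun_cast x (lam i)
    rw [hg i] at this
    simpa using this.symm
  set M : Multiset ℂ := Finset.univ.val.map lamC with hM
  have hMnodup : M.Nodup := Multiset.Nodup.map hinj Finset.univ.nodup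
  have hMle : M ≤ Lc.charpoly.roots := by
    rw [Multiset.le_iff_count]
    intro a
    by_cases ha : a ∈ M
    · rw [Multiset.count_eq_one_of_mem hMnodup ha]
      obtain ⟨i, _, rfl⟩ := Multiset.mem_map.mp ha
      rw [Polynomial.count_roots]
      exact (Polynomial.rootMultiplicity_pos hR0).mpr (hroots_eval i)
    · rw [Multiset.count_eq_zero_of_notMem ha]; exact Nat.zero_le _
  have hcard : Multiset.card Lc.charpoly.roots ≤ Multiset.card M := by
    have h1 : Multiset.card M = N := by
      rw [hM, Multiset.card_map]
      exact Finset.card_fin N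
    rw [h1]
    calc Multiset.card Lc.charpoly.roots ≤ Lc.charpoly.natDegree := Polynomial.card_roots' _
      _ = N := hdeg
  have hroots : M = Lc.charpoly.roots := Multiset.eq_of_le_of_card_le hMle hcard
  refine ⟨lam, hmono, hlam0 _ rfl, fun i hi => ⟨(hlam_mem i hi).1, (hlam_mem i hi).2⟩, ?_, ?_, ?_⟩
  · ext z
    rw [show spectrum ℂ (L.map (fun r : ℝ => (r : ℂ))) = spectrum ℂ Lc from rfl]
    rw [Set.mem_range]
    rw [mem_spectrum_iff' Lc z]
    constructor
    · intro hz
      have hzr : z ∈ M := by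
        rw [hroots]
        exact Polynomial.mem_roots'.mpr ⟨hR0, hz⟩
      obtain ⟨i, _, rfl⟩ := Multiset.mem_map.mp hzr
      exact ⟨i, rfl⟩
    · rintro ⟨i, rfl⟩
      exact hroots_eval i
  · intro i
    rw [← Polynomial.count_roots, ← hroots]
    exact Multiset.count_eq_one_of_mem hMnodup
      (Multiset.mem_map.mpr ⟨i, Finset.mem_val.mpr (Finset.mem_univ i), rfl⟩)
  · ext l
    simp only [Set.mem_setOf_eq, Set.mem_range]
    constructor
    · rintro ⟨hnot, hphi⟩
      have hl : ∀ j, l ≠ (x j : ℂ) := by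
        intro j he
        exact hnot ⟨j, he.symm⟩
      have heval : (Qc N x).eval l = 0 := by
        rw [phi_relation x hNC l hl, ← hφ l, hphi]
        ring
      have hzr : l ∈ M := by
        rw [hroots]
        exact Polynomial.mem_roots'.mpr ⟨hR0, by rw [hcp]; exact heval⟩
      obtain ⟨i, _, rfl⟩ := Multiset.mem_map.mp hzr
      exact ⟨i, rfl⟩
    · rintro ⟨i, rfl⟩
      have hl : ∀ j, lamC i ≠ (x j : ℂ) := by
        intro j he
        exact hlam_ne i j (Complex.ofReal_injective he)
      constructor
      · rintro ⟨j, he⟩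
        exact hl j he.symm
      · have heval : (Qc N x).eval (lamC i) = 0 := by
          rw [← hcp]; exact hroots_eval i
        rw [phi_relation x hNC _ hl] at heval
        have hprod : (∏ j, (lamC i - (x j : ℂ))) ≠ 0 :=
          Finset.prod_ne_zero_iff.mpr fun j _ => sub_ne_zero.mpr (hl j)
        rw [hφ]
        rcases mul_eq_zero.mp heval with h | h
        · rcases mul_eq_zero.mp h with h' | h'
          · exact absurd h' (by simp [hNC])
          · exact h'
        · exact absurd h hprod
end

section
/- For each eigenvalue λ_i of L_N (equivalently, each zero λ_i of φ), the vector ψ^{(i)} ∈ ℝ^N with components ψ^{(i)}_j := x_j/(x_j − λ_i), j = 1, …, N, is a nonzero eigenvector of L_N with eigenvalue λ_i, i.e. L_N ψ^{(i)} = λ_i ψ^{(i)}. -/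
/-!
Writing `ψ j = x j / (x j - λ) = 1 + λ / (x j - λ)`, the equation `φ(λ) = 0` says exactly that
the entries of `ψ` sum to `N`, i.e. `ψ` has mean `1`. The generator acts as
`(L ψ) i = x i * (ψ i - mean ψ)`, so `(L ψ) i = x i * (ψ i - 1) = λ * ψ i`.
A vector with entry sum `N ≠ 0` is nonzero.
-/

open Finset Matrix

variable {ι K : Type*} [Fintype ι] [Field K]

theorem mulVec_eq_mul_sub_sum_div_of_entries [DecidableEq ι] {L : Matrix ι ι K} {x : ι → K}
    {c : K} (hc : c ≠ 0)
    (hL : ∀ i j, L i j = if i = j then ((c - 1) / c) * x i else -(x i) / c) (ψ : ι → K) :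
    L *ᵥ ψ = fun i => x i * (ψ i - (∑ j, ψ j) / c) := by
  funext i
  have hsplit : ∑ j, ψ j = ψ i + ∑ j ∈ univ.erase i, ψ j :=
    (add_sum_erase _ _ (mem_univ i)).symm
  have hoff : ∑ j ∈ univ.erase i, L i j * ψ j = -(x i) / c * ∑ j ∈ univ.erase i, ψ j := by
    rw [mul_sum]
    exact sum_congr rfl fun j hj => by rw [hL i j, if_neg (ne_of_mem_erase hj).symm]
  rw [Matrix.mulVec, dotProduct, ← add_sum_erase _ _ (mem_univ i), hoff, hL i i, if_pos rfl,
    hsplit]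
  field_simp
  ring

theorem sum_div_sub_eq_card_add_sum {x : ι → K} {lam : K} (hlam : ∀ j, x j ≠ lam) :
    ∑ j, x j / (x j - lam) = Fintype.card ι + ∑ j, lam / (x j - lam) := by
  have hterm : ∀ j, x j / (x j - lam) = 1 + lam / (x j - lam) := fun j => by
    field_simp [sub_ne_zero.mpr (hlam j)]
    ring
  simp only [hterm, sum_add_distrib, sum_const, card_univ, nsmul_one]

theorem mulVec_div_sub_eq_smul_of_sum_eq [DecidableEq ι] {L : Matrix ι ι K} {x : ι → K}
    {c : K} (hc : c ≠ 0)
    (hL : ∀ i j, L i j = if i = j then ((c - 1) / c) * x i else -(x i) / c)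
    {lam : K} (hlam : ∀ j, x j ≠ lam) (hsum : ∑ j, x j / (x j - lam) = c) :
    L *ᵥ (fun j => x j / (x j - lam)) = lam • fun j => x j / (x j - lam) := by
  rw [mulVec_eq_mul_sub_sum_div_of_entries hc hL, hsum, div_self hc]
  funext i
  have hden : x i - lam ≠ 0 := sub_ne_zero.mpr (hlam i)
  simp only [Pi.smul_apply, smul_eq_mul]
  field_simp
  ring

theorem rem_trap_eigenvector_formula_general
    (N : ℕ) (hN : 2 ≤ N) (x : Fin N → ℝ)
    (L : Matrix (Fin N) (Fin N) ℝ)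
    (hL : ∀ i j, L i j = if i = j then ((N - 1 : ℝ) / N) * x i else -(x i) / N)
    (lam : ℝ) (hlam_ne : ∀ j, x j ≠ lam)
    (hlam_zero : ∑ j : Fin N, lam / (x j - lam) = 0)
    (ψ : Fin N → ℝ) (hψ : ∀ j, ψ j = x j / (x j - lam)) :
    L.mulVec ψ = lam • ψ ∧ ψ ≠ 0 := by
  have hNne : (N : ℝ) ≠ 0 := Nat.cast_ne_zero.mpr (by omega)
  obtain rfl : ψ = fun j => x j / (x j - lam) := funext hψ
  have hsum : ∑ j, x j / (x j - lam) = N := by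
    simpa [hlam_zero] using sum_div_sub_eq_card_add_sum hlam_ne
  refine ⟨mulVec_div_sub_eq_smul_of_sum_eq hNne hL hlam_ne hsum, fun hzero => hNne ?_⟩
  rw [← hsum, hzero]
  simp

/-- For each eigenvalue `lam` of the trap-model generator `L` (equivalently,
each zero of `φ`, i.e. each real number `lam` outside `{x j}` with `∑ j, lam/(x j - lam) = 0`),
the vector `ψ` with components `ψ j = x j / (x j - lam)` is a nonzero eigenvector of `L` with
eigenvalue `lam`, i.e. `L ψ = lam • ψ`. -/
theorem rem_trap_eigenvector_formula
    (N : ℕ) (hN : 2 ≤ N) (x : Fin N → ℝ)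
    (hx_pos : ∀ i, 0 < x i) (hx_inj : Function.Injective x)
    (L : Matrix (Fin N) (Fin N) ℝ)
    (hL : ∀ i j, L i j = if i = j then ((N - 1 : ℝ) / N) * x i else -(x i) / N)
    (lam : ℝ) (hlam_ne : ∀ j, x j ≠ lam)
    (hlam_zero : ∑ j : Fin N, lam / (x j - lam) = 0)
    (ψ : Fin N → ℝ) (hψ : ∀ j, ψ j = x j / (x j - lam)) :
    L.mulVec ψ = lam • ψ ∧ ψ ≠ 0 :=
  rem_trap_eigenvector_formula_general N hN x L hL lam hlam_ne hlam_zero ψ hψ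
end

section
/- The vectors ψ^{(1)}, …, ψ^{(N)}, where ψ^{(i)}_j := x_j/(x_j − λ_i), form an orthogonal basis of ℝ^N with respect to the weighted inner product ⟨a, b⟩_μ := Σ_{j=1}^N (1/x_j)·a_j·b_j; that is, they are linearly independent and ⟨ψ^{(i)}, ψ^{(k)}⟩_μ = 0 whenever i ≠ k. -/
/-!
For `a ≠ b` off the spectrum `{x j}`, the partial-fraction identity
`x / ((x - a) (x - b)) * (a - b) = a / (x - a) - b / (x - b)` gives
`(a - b) ⟨ψ(a), ψ(b)⟩_μ = φ(a) - φ(b)` for `ψ(a)_j = x_j / (x_j - a)`, so the vectors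
attached to distinct zeros of `φ` are `μ`-orthogonal. As the weights `1 / x_j` are positive,
no `ψ(a)` is isotropic, and an orthogonal family of non-isotropic vectors is linearly
independent.
-/

open Finset

section WeightedForm

variable {ι : Type*} [Fintype ι]

def weightedForm (w : ι → ℝ) : LinearMap.BilinForm ℝ (ι → ℝ) :=
  LinearMap.mk₂ ℝ (fun a b => ∑ j, w j * a j * b j)
    (fun a a' b => by simp only [Pi.add_apply, mul_add, add_mul, sum_add_distrib])
    (fun c a b => by
      simp only [Pi.smul_apply, smul_eq_mul, mul_sum]
      exact sum_congr rfl fun _ _ => by ring)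
    (fun a b b' => by simp only [Pi.add_apply, mul_add, sum_add_distrib])
    (fun c a b => by
      simp only [Pi.smul_apply, smul_eq_mul, mul_sum]
      exact sum_congr rfl fun _ _ => by ring)

theorem weightedForm_apply (w a b : ι → ℝ) :
    weightedForm w a b = ∑ j, w j * a j * b j :=
  rfl

theorem weightedForm_self_pos {w a : ι → ℝ} (hw : ∀ j, 0 < w j) (ha : a ≠ 0) :
    0 < weightedForm w a a := by
  obtain ⟨j, hj⟩ := Function.ne_iff.mp ha
  rw [weightedForm_apply]
  refine sum_pos' (fun k _ => ?_) ⟨j, mem_univ j, ?_⟩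
  · rw [mul_assoc]
    exact mul_nonneg (hw k).le (mul_self_nonneg _)
  · rw [mul_assoc]
    exact mul_pos (hw j) (mul_self_pos.mpr hj)

end WeightedForm

section Secular

variable {ι : Type*} {x : ι → ℝ}

variable (x) in
noncomputable def trapEigenvector (a : ℝ) : ι → ℝ :=
  fun j => x j / (x j - a)

theorem trapEigenvector_ne_zero [Nonempty ι] (hx : ∀ j, x j ≠ 0) {a : ℝ} (ha : ∀ j, x j ≠ a) :
    trapEigenvector x a ≠ 0 := by
  obtain ⟨j⟩ := ‹Nonempty ι›
  exact Function.ne_iff.mpr ⟨j, div_ne_zero (hx j) (sub_ne_zero.mpr (ha j))⟩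

variable [Fintype ι]

variable (x) in
noncomputable def secular (a : ℝ) : ℝ :=
  ∑ j, a / (x j - a)

theorem sub_mul_weightedForm_trapEigenvector (hx : ∀ j, x j ≠ 0) {a b : ℝ}
    (ha : ∀ j, x j ≠ a) (hb : ∀ j, x j ≠ b) :
    (a - b) * weightedForm (fun j => 1 / x j) (trapEigenvector x a) (trapEigenvector x b) =
      secular x a - secular x b := by
  rw [weightedForm_apply, mul_sum, secular, secular, ← sum_sub_distrib]
  refine sum_congr rfl fun j _ => ?_
  have hxa := sub_ne_zero.mpr (ha j)
  have hxb := sub_ne_zero.mpr (hb j)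
  have hxj := hx j
  simp only [trapEigenvector]
  field_simp
  ring

theorem weightedForm_trapEigenvector_eq_zero (hx : ∀ j, x j ≠ 0) {a b : ℝ} (hab : a ≠ b)
    (ha : ∀ j, x j ≠ a) (hb : ∀ j, x j ≠ b) (hφa : secular x a = 0) (hφb : secular x b = 0) :
    weightedForm (fun j => 1 / x j) (trapEigenvector x a) (trapEigenvector x b) = 0 := by
  have h := sub_mul_weightedForm_trapEigenvector hx ha hb
  rw [hφa, hφb, sub_zero] at h
  exact (mul_eq_zero.mp h).resolve_left (sub_ne_zero.mpr hab)

end Secular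

/-- The eigenvectors `ψ i`, with `ψ i j = x j / (x j - lam i)` where
`0 = lam 0 < lam 1 < … < lam (N-1)` are the `N` zeros of `φ`, form an orthogonal basis of
`ℝ^N` for the weighted inner product `⟨a, b⟩_μ = ∑ j, (1 / x j) * a j * b j`:
they are linearly independent (hence a basis, being `N` of them) and pairwise
`μ`-orthogonal. -/
theorem rem_trap_eigenvectors_orthogonal_basis
    (N : ℕ) (x : Fin N → ℝ)
    (hx_pos : ∀ i, 0 < x i)
    (lam : Fin N → ℝ) (hlam_mono : StrictMono lam)
    (hlam_ne : ∀ i j, x j ≠ lam i)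
    (hlam_root : ∀ i, ∑ j : Fin N, lam i / (x j - lam i) = 0)
    (ψ : Fin N → Fin N → ℝ) (hψ : ∀ i j, ψ i j = x j / (x j - lam i)) :
    LinearIndependent ℝ ψ ∧
    ∀ i k : Fin N, i ≠ k → ∑ j : Fin N, (1 / x j) * ψ i j * ψ k j = 0 := by
  have hx : ∀ j, x j ≠ 0 := fun j => (hx_pos j).ne'
  have hψ_eq : ψ = fun i => trapEigenvector x (lam i) := funext fun i => funext (hψ i)
  have horth : ∀ i k, i ≠ k → weightedForm (fun j => 1 / x j) (ψ i) (ψ k) = 0 :=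
    fun i k hik => hψ_eq ▸ weightedForm_trapEigenvector_eq_zero hx
      (hlam_mono.injective.ne hik) (hlam_ne i) (hlam_ne k) (hlam_root i) (hlam_root k)
  have hnonisotropic : ∀ i, weightedForm (fun j => 1 / x j) (ψ i) (ψ i) ≠ 0 := fun i =>
    have : Nonempty (Fin N) := ⟨i⟩
    (weightedForm_self_pos (fun j => one_div_pos.mpr (hx_pos j))
      (hψ_eq ▸ trapEigenvector_ne_zero hx (hlam_ne i))).ne'
  exact ⟨LinearMap.linearIndependent_of_isOrthoᵢ horth hnonisotropic, horth⟩
end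

section
/- Let C be the circle of center c ∈ ℂ and radius r > 0, positively oriented, whose open interior contains all the points λ_1, …, λ_N and x_1, …, x_N, and let g be holomorphic on an open set containing the closed disk {z : |z − c| ≤ r}. Then for every j = 1, …, N: Σ_{k=1}^N γ_k · g(λ_k)/(x_j − λ_k) = (1/(2πi)) ∮_C g(λ)/(φ(λ)·(x_j − λ)) dλ, where the integrand, a priori defined off {x_1,…,x_N} ∪ {λ_1,…,λ_N}, extends across each x_i to a meromorphic function with simple poles only at λ_1, …, λ_N. -/
/-!
Off the points `x_i`, `φ(z) ∏_i (z - x_i) = -z (∏_i (z - x_i))'`. The polynomial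
`z (∏_i (z - x_i))'` has degree `N`, leading coefficient `N`, and vanishes at the `N` distinct
zeros `λ_k` of `φ`, so it equals `N ∏_k (z - λ_k)`; hence
`φ(z) (x_j - z) = N ∏_k (z - λ_k) / ∏_{i ≠ j} (z - x_i)`. Lagrange interpolation of
`∏_{i ≠ j} (X - x_i)` at the nodes `λ_k` splits `1 / (φ(z) (x_j - z))` into simple fractions
`∑_k γ_k / ((x_j - λ_k) (z - λ_k))`: the coefficient comes from differentiating the factorisation
at `λ_k`, where `φ` vanishes and `φ'(λ_k) = 1 / γ_k`. The Cauchy integral formula applied to each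
simple fraction gives the theorem.
-/

open Polynomial Lagrange Finset Metric Complex

theorem circleIntegral_sum_mul_sub_inv_mul {ι : Type*} {s : Finset ι} {A b : ι → ℂ} {c : ℂ}
    {R : ℝ} {g : ℂ → ℂ} (hg : DifferentiableOn ℂ g (closedBall c R))
    (hb : ∀ k ∈ s, b k ∈ ball c R) :
    (∮ z in C(c, R), ∑ k ∈ s, A k * ((z - b k)⁻¹ * g z)) =
      2 * Real.pi * I * ∑ k ∈ s, A k * g (b k) := by
  have hint (k : ι) (hk : k ∈ s) : CircleIntegrable (fun z => A k * ((z - b k)⁻¹ * g z)) c R := by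
    refine ContinuousOn.circleIntegrable (nonempty_ball.1 ⟨_, hb k hk⟩).le <|
      continuousOn_const.mul <| ContinuousOn.mul ?_ (hg.continuousOn.mono sphere_subset_closedBall)
    exact (continuousOn_id.sub continuousOn_const).inv₀ fun z hz =>
      sub_ne_zero.2 (sphere_disjoint_ball.ne_of_mem hz (hb k hk))
  rw [circleIntegral.integral_fun_sum hint, mul_sum]
  refine sum_congr rfl fun k hk => ?_
  have hcauchy := hg.circleIntegral_sub_inv_smul (hb k hk)
  simp only [smul_eq_mul] at hcauchy
  rw [circleIntegral.integral_const_mul, hcauchy]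
  ring

section Secular

variable {ι : Type*} [Fintype ι]

def secularFun {F : Type*} [Field F] (a : ι → F) (z : F) : F := ∑ i, z / (a i - z)

theorem hasDerivAt_secularFun {𝕜 : Type*} [NontriviallyNormedField 𝕜] {a : ι → 𝕜} {z : 𝕜}
    (hz : ∀ i, z ≠ a i) : HasDerivAt (secularFun a) (∑ i, a i / (a i - z) ^ 2) z := by
  unfold secularFun
  refine HasDerivAt.fun_sum fun i _ => ?_
  have hi : a i - z ≠ 0 := sub_ne_zero.2 (hz i).symm
  have hquot := (hasDerivAt_id z).div ((hasDerivAt_const z (a i)).sub (hasDerivAt_id z)) hi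
  refine hquot.congr_deriv ?_
  simp only [Pi.sub_apply, id]
  field_simp
  ring

variable [DecidableEq ι]

section Field

variable {F : Type*} [Field F] {a b : ι → F}

theorem secularFun_mul_eval_nodal {z : F} (hz : ∀ i, z ≠ a i) :
    secularFun a z * (nodal univ a).eval z = -(z * (derivative (nodal univ a)).eval z) := by
  rw [secularFun, derivative_nodal, eval_finsetSum, sum_mul, mul_sum, ← sum_neg_distrib]
  refine sum_congr rfl fun i _ => ?_
  have hi : a i - z ≠ 0 := sub_ne_zero.2 (hz i).symm
  rw [nodal_eq_mul_nodal_erase (mem_univ i), eval_mul]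
  simp only [eval_sub, eval_X, eval_C]
  field_simp
  ring

theorem X_mul_derivative_nodal_eq (hb : Function.Injective b)
    (hroot : ∀ k, (X * derivative (nodal univ a)).eval (b k) = 0) :
    X * derivative (nodal univ a) = C (Fintype.card ι : F) * nodal univ b := by
  have hmonic (s : Finset ι) (v : ι → F) : IsMonicOfDegree (nodal s v) #s :=
    ⟨natDegree_nodal, nodal_monic⟩
  refine eq_of_degree_sub_lt_of_eval_index_eq univ hb.injOn ?_
    fun k _ => by simp [hroot k, eval_nodal_at_node]
  have hsum : X * derivative (nodal univ a) - C (Fintype.card ι : F) * nodal univ b =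
      ∑ i, (X * nodal (univ.erase i) a - nodal univ b) := by
    rw [derivative_nodal, mul_sum, sum_sub_distrib, sum_const, card_univ, nsmul_eq_mul, map_natCast]
  rw [hsum, ← mem_degreeLT]
  refine Submodule.sum_mem _ fun i _ => mem_degreeLT.2 ?_
  have hXi : IsMonicOfDegree (X * nodal (univ.erase i) a) #(univ : Finset ι) := by
    rw [← card_erase_add_one (mem_univ i), add_comm]
    exact (isMonicOfDegree_X (R := F)).mul (hmonic _ _)
  exact degree_le_natDegree.trans_lt <| WithBot.coe_lt_coe.2 <|
    hXi.natDegree_sub_lt (card_ne_zero_of_mem (mem_univ i)) (hmonic univ b)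

theorem secularFun_mul_eval_nodal_eq_neg_card_mul (hb : Function.Injective b)
    (hab : ∀ i k, a i ≠ b k) (hφ : ∀ k, secularFun a (b k) = 0) {z : F} (hz : ∀ i, z ≠ a i) :
    secularFun a z * (nodal univ a).eval z = -(Fintype.card ι * (nodal univ b).eval z) := by
  have hroot (k : ι) : (X * derivative (nodal univ a)).eval (b k) = 0 := by
    rw [eval_mul, eval_X, ← neg_eq_zero,
      ← secularFun_mul_eval_nodal fun i => (hab i k).symm, hφ k, zero_mul]
  have h := congrArg (eval z) (X_mul_derivative_nodal_eq hb hroot)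
  rw [eval_mul, eval_mul, eval_X, eval_C] at h
  rw [secularFun_mul_eval_nodal hz, h]

end Field

section Residues

variable {𝕜 : Type*} [NontriviallyNormedField 𝕜] {a b : ι → 𝕜}

open Filter Topology

theorem card_mul_eval_derivative_nodal (hb : Function.Injective b) (hab : ∀ i k, a i ≠ b k)
    (hφ : ∀ k, secularFun a (b k) = 0) (k : ι) :
    (Fintype.card ι : 𝕜) * (derivative (nodal univ b)).eval (b k) =
      -((∑ i, a i / (a i - b k) ^ 2) * (nodal univ a).eval (b k)) := by
  have hnear : ∀ᶠ z in 𝓝 (b k), ∀ i, z ≠ a i :=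
    eventually_all.2 fun i => eventually_ne_nhds (hab i k).symm
  have hprod :=
    (hasDerivAt_secularFun fun i => (hab i k).symm).mul ((nodal univ a).hasDerivAt (b k))
  rw [hφ k, zero_mul, add_zero] at hprod
  have hrhs := (((nodal univ b).hasDerivAt (b k)).const_mul (Fintype.card ι : 𝕜)).neg
  have := hprod.unique <| hrhs.congr_of_eventuallyEq <|
    hnear.mono fun z hz => secularFun_mul_eval_nodal_eq_neg_card_mul hb hab hφ hz
  linear_combination this

theorem inv_card_mul_nodalWeight_mul_eval_nodal_erase (hb : Function.Injective b)
    (hab : ∀ i k, a i ≠ b k) (hφ : ∀ k, secularFun a (b k) = 0) (j k : ι) :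
    (Fintype.card ι : 𝕜)⁻¹ * (nodalWeight univ b k * (nodal (univ.erase j) a).eval (b k)) =
      ((∑ i, a i / (a i - b k) ^ 2) * (a j - b k))⁻¹ := by
  have hPk : (nodal (univ.erase j) a).eval (b k) ≠ 0 :=
    eval_nodal_not_at_node fun i _ => (hab i k).symm
  have hd := card_mul_eval_derivative_nodal hb hab hφ k
  rw [nodal_eq_mul_nodal_erase (v := a) (mem_univ j), eval_mul] at hd
  simp only [eval_sub, eval_X, eval_C] at hd
  rw [nodalWeight_eq_eval_derivative_nodal (mem_univ k), ← mul_assoc, ← mul_inv, hd,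
    show -((∑ i, a i / (a i - b k) ^ 2) * ((b k - a j) * (nodal (univ.erase j) a).eval (b k))) =
      (∑ i, a i / (a i - b k) ^ 2) * (a j - b k) * (nodal (univ.erase j) a).eval (b k) by ring,
    mul_inv, inv_mul_cancel_right₀ hPk]

theorem inv_secularFun_mul_sub_eq_sum (hb : Function.Injective b) (hab : ∀ i k, a i ≠ b k)
    (hφ : ∀ k, secularFun a (b k) = 0) (j : ι) {z : 𝕜} (hza : ∀ i, z ≠ a i)
    (hzb : ∀ k, z ≠ b k) :
    (secularFun a z * (a j - z))⁻¹ =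
      ∑ k, ((∑ i, a i / (a i - b k) ^ 2) * (a j - b k))⁻¹ * (z - b k)⁻¹ := by
  set P := nodal (univ.erase j) a
  have hP : P.degree < #(univ : Finset ι) := by
    rw [degree_nodal]
    exact_mod_cast card_erase_lt_of_mem (mem_univ j)
  have hinterp := congrArg (eval z) (eq_interpolate hb.injOn hP)
  rw [eval_interpolate_not_at_node _ fun k _ => hzb k] at hinterp
  have hsec := secularFun_mul_eval_nodal_eq_neg_card_mul hb hab hφ hza
  rw [nodal_eq_mul_nodal_erase (mem_univ j), eval_mul] at hsec
  simp only [eval_sub, eval_X, eval_C] at hsec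
  have hPz : P.eval z ≠ 0 := eval_nodal_not_at_node fun i _ => hza i
  have hnb : (nodal univ b).eval z ≠ 0 := eval_nodal_not_at_node fun k _ => hzb k
  have hden : secularFun a z * (a j - z) = Fintype.card ι * (nodal univ b).eval z / P.eval z := by
    rw [eq_div_iff hPz]
    linear_combination -hsec
  calc (secularFun a z * (a j - z))⁻¹
      = (Fintype.card ι : 𝕜)⁻¹ * ((nodal univ b).eval z)⁻¹ * P.eval z := by
        rw [hden, inv_div, div_eq_mul_inv, mul_inv]
        ring
    _ = ∑ k, (Fintype.card ι : 𝕜)⁻¹ * (nodalWeight univ b k * P.eval (b k)) * (z - b k)⁻¹ := by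
        rw [mul_assoc, hinterp, inv_mul_cancel_left₀ hnb, mul_sum]
        exact sum_congr rfl fun k _ => by ring
    _ = _ := by simp only [P, inv_card_mul_nodalWeight_mul_eval_nodal_erase hb hab hφ]

end Residues

end Secular

/-- Residue-theorem representation of the spectral sums.  Let
`0 = lam 0 < … < lam (N-1)` be the zeros of `φ` (the eigenvalues of the trap-model generator),
let `γ k = (∑ j, x j / (x j - lam k)²)⁻¹`, let `C` be the positively oriented circle of center
`c` and radius `r > 0` whose open interior contains all the `lam k` and all the `x i`, and let
`g` be holomorphic on an open set containing the closed disk `{z : |z - c| ≤ r}`.  Then for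
every `j`,
`∑ k, γ k * g (lam k) / (x j - lam k) = (1/(2πi)) ∮_C g(λ) / (φ(λ) * (x j - λ)) dλ`. -/
theorem rem_trap_residue_representation
    (N : ℕ) (x : Fin N → ℝ)
    (lam : Fin N → ℝ) (hlam_mono : StrictMono lam)
    (hlam_ne : ∀ k j, x j ≠ lam k)
    (hlam_root : ∀ k, ∑ j : Fin N, lam k / (x j - lam k) = 0)
    (γ : Fin N → ℝ) (hγ : ∀ k, γ k = (∑ j : Fin N, x j / (x j - lam k) ^ 2)⁻¹)
    (c : ℂ) (r : ℝ) (hr : 0 < r)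
    (h_in : ∀ i : Fin N,
      ‖(lam i : ℂ) - c‖ < r ∧ ‖(x i : ℂ) - c‖ < r)
    (g : ℂ → ℂ) (U : Set ℂ) (hUball : Metric.closedBall c r ⊆ U)
    (hg : DifferentiableOn ℂ g U) :
    ∀ j : Fin N,
      ∑ k : Fin N, (γ k : ℂ) * g ((lam k : ℝ) : ℂ) / ((x j : ℂ) - (lam k : ℂ)) =
        (1 / (2 * Real.pi * Complex.I)) *
          ∮ z in C(c, r),
            g z / ((∑ i : Fin N, z / ((x i : ℂ) - z)) * ((x j : ℂ) - z)) := by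
  intro j
  set a : Fin N → ℂ := fun i => x i
  set b : Fin N → ℂ := fun k => lam k
  have hb : Function.Injective b := ofReal_injective.comp hlam_mono.injective
  have hab (i k : Fin N) : a i ≠ b k := ofReal_injective.ne (hlam_ne k i)
  have hφ (k : Fin N) : secularFun a (b k) = 0 := by
    simpa [secularFun, a, b] using congrArg ((↑) : ℝ → ℂ) (hlam_root k)
  have hsphere : Set.EqOn (fun z => g z / ((∑ i : Fin N, z / ((x i : ℂ) - z)) * ((x j : ℂ) - z)))
      (fun z => ∑ k, ((∑ i, a i / (a i - b k) ^ 2) * (a j - b k))⁻¹ * ((z - b k)⁻¹ * g z))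
      (sphere c r) := fun z hz => by
    have hza (i : Fin N) : z ≠ a i :=
      sphere_disjoint_ball.ne_of_mem hz (mem_ball_iff_norm.2 (h_in i).2)
    have hzb (k : Fin N) : z ≠ b k :=
      sphere_disjoint_ball.ne_of_mem hz (mem_ball_iff_norm.2 (h_in k).1)
    change g z / (secularFun a z * (a j - z)) = _
    rw [div_eq_mul_inv, inv_secularFun_mul_sub_eq_sum hb hab hφ j hza hzb, mul_sum]
    exact sum_congr rfl fun k _ => by ring
  rw [circleIntegral.integral_congr hr.le hsphere, circleIntegral_sum_mul_sub_inv_mul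
    (hg.mono hUball) fun k _ => mem_ball_iff_norm.2 (h_in k).1, ← mul_assoc, one_div,
    inv_mul_cancel₀ two_pi_I_ne_zero, one_mul]
  refine sum_congr rfl fun k _ => ?_
  have hγk : (γ k : ℂ) = (∑ i, a i / (a i - b k) ^ 2)⁻¹ := by
    rw [hγ k]
    push_cast
    rfl
  rw [hγk, mul_inv]
  ring
end

section
/- For every t ≥ 0 and every j = 1, …, N, the distribution at time t of the trap-model chain started uniformly satisfies (1/N)·Σ_{i=1}^N (exp(−t·L_N))_{i,j} = Σ_{k=1}^N γ_k · e^{−t·λ_k}/(x_j − λ_k), where exp(−t·L_N) is the matrix exponential. -/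
/-!
The vectors `v_k = (x_i / (x_i - λ_k))_i` satisfy `∑_i (v_k)_i = N + φ(λ_k) = N`, and this makes
them right eigenvectors of `L_N`: `(L_N v_k)_i = x_i (v_k)_i - x_i = λ_k (v_k)_i`. The covectors
`w_k = (γ_k / (x_j - λ_k))_j` form the dual basis: for `k ≠ l`, partial fractions reduce `w_k v_l`
to a multiple of `φ(λ_k) - φ(λ_l) = 0`, and `γ_k` is exactly the normalisation `w_k v_k = 1`.
Hence `exp(-t L_N) = V diag(e^{-t λ_k}) W`, and averaging over the starting point uses once more
that each column of `V` sums to `N`.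
-/

open Matrix Finset

variable {ι : Type*} [Fintype ι]

noncomputable def trapGenerator [DecidableEq ι] (x : ι → ℝ) : Matrix ι ι ℝ :=
  diagonal x - (Fintype.card ι : ℝ)⁻¹ • of fun i _ => x i

noncomputable def trapEigenvectors (x lam : ι → ℝ) : Matrix ι ι ℝ :=
  of fun i k => x i / (x i - lam k)

noncomputable def trapDualEigenvectors (x lam : ι → ℝ) : Matrix ι ι ℝ :=
  of fun k j => (∑ i, x i / (x i - lam k) ^ 2)⁻¹ / (x j - lam k)

theorem trapGenerator_apply [DecidableEq ι] (x : ι → ℝ) (i j : ι) :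
    trapGenerator x i j =
      if i = j then ((Fintype.card ι - 1 : ℝ) / Fintype.card ι) * x i
      else -(x i) / Fintype.card ι := by
  have : (Fintype.card ι : ℝ) ≠ 0 :=
    Nat.cast_ne_zero.mpr (Fintype.card_pos_iff.mpr ⟨i⟩).ne'
  by_cases h : i = j
  · subst h
    simp only [trapGenerator, Matrix.sub_apply, diagonal_apply_eq, Matrix.smul_apply, of_apply,
      smul_eq_mul, ↓reduceIte]
    field_simp
  · simp [trapGenerator, h]; ring

theorem sum_trapEigenvectors_apply {x lam : ι → ℝ} {k : ι} (hne : ∀ j, x j ≠ lam k) :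
    ∑ i, trapEigenvectors x lam i k = Fintype.card ι + ∑ j, lam k / (x j - lam k) := by
  have h (j : ι) : x j / (x j - lam k) = 1 + lam k / (x j - lam k) := by
    have := sub_ne_zero.mpr (hne j)
    field_simp
    ring
  simp [trapEigenvectors, h, sum_add_distrib]

theorem trapGenerator_mul_trapEigenvectors [DecidableEq ι] {x lam : ι → ℝ}
    (hne : ∀ k j, x j ≠ lam k) (hroot : ∀ k, ∑ j, lam k / (x j - lam k) = 0) :
    trapGenerator x * trapEigenvectors x lam = trapEigenvectors x lam * diagonal lam := by
  ext i k
  have hcard : (Fintype.card ι : ℝ) ≠ 0 :=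
    Nat.cast_ne_zero.mpr (Fintype.card_pos_iff.mpr ⟨i⟩).ne'
  have hsum := sum_trapEigenvectors_apply (hne k)
  rw [hroot k, add_zero] at hsum
  have hik := sub_ne_zero.mpr (hne k i)
  rw [trapGenerator, Matrix.sub_mul, Matrix.smul_mul, Matrix.sub_apply, Matrix.smul_apply,
    diagonal_mul, mul_diagonal, mul_apply]
  simp only [of_apply]
  rw [← mul_sum, hsum]
  simp only [trapEigenvectors, of_apply, smul_eq_mul]
  field_simp
  ring

theorem trapDualEigenvectors_mul_trapEigenvectors [DecidableEq ι] {x lam : ι → ℝ}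
    (hx : ∀ i, 0 < x i) (hlam : Function.Injective lam) (hne : ∀ k j, x j ≠ lam k)
    (hroot : ∀ k, ∑ j, lam k / (x j - lam k) = 0) :
    trapDualEigenvectors x lam * trapEigenvectors x lam = 1 := by
  ext k l
  have hd (k j : ι) : x j - lam k ≠ 0 := sub_ne_zero.mpr (hne k j)
  simp only [trapDualEigenvectors, trapEigenvectors, mul_apply, of_apply]
  rcases eq_or_ne k l with rfl | hkl
  · have hpos : 0 < ∑ i, x i / (x i - lam k) ^ 2 :=
      sum_pos (fun i _ => div_pos (hx i) (sq_pos_of_ne_zero (hd k i))) ⟨k, mem_univ k⟩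
    calc ∑ j, (∑ i, x i / (x i - lam k) ^ 2)⁻¹ / (x j - lam k) * (x j / (x j - lam k))
        = (∑ i, x i / (x i - lam k) ^ 2)⁻¹ * ∑ j, x j / (x j - lam k) ^ 2 := by
          rw [mul_sum]; congr! 1 with j; field_simp
      _ = (1 : Matrix ι ι ℝ) k k := by rw [inv_mul_cancel₀ hpos.ne', one_apply_eq]
  · -- partial fractions: each term is a difference of summands of `φ(λ_k)` and `φ(λ_l)`
    have hkl' : lam k - lam l ≠ 0 := sub_ne_zero.mpr (hlam.ne hkl)
    calc ∑ j, (∑ i, x i / (x i - lam k) ^ 2)⁻¹ / (x j - lam k) * (x j / (x j - lam l))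
        = (∑ i, x i / (x i - lam k) ^ 2)⁻¹ / (lam k - lam l) *
            ∑ j, (lam k / (x j - lam k) - lam l / (x j - lam l)) := by
          rw [mul_sum]
          congr! 1 with j
          have := hd k j
          have := hd l j
          field_simp
          ring
      _ = (1 : Matrix ι ι ℝ) k l := by
          rw [sum_sub_distrib, hroot, hroot, sub_zero, mul_zero, one_apply_ne hkl]

theorem Matrix.exp_eq_mul_diagonal_mul_of_mul_eq_mul_diagonal [DecidableEq ι]
    {A V W : Matrix ι ι ℝ} {d : ι → ℝ} (hWV : W * V = 1) (hAV : A * V = V * diagonal d) :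
    NormedSpace.exp A = V * diagonal (fun k => Real.exp (d k)) * W := by
  have hVW : V * W = 1 := mul_eq_one_comm.mp hWV
  have hW : V⁻¹ = W := inv_eq_right_inv hVW
  have hV : IsUnit V := (isUnit_iff_isUnit_det V).mpr (isUnit_det_of_right_inverse hVW)
  have hA : A = V * diagonal d * V⁻¹ := by
    rw [hW, ← hAV, Matrix.mul_assoc, hVW, Matrix.mul_one]
  rw [hA, exp_conj V _ hV, exp_diagonal, hW]
  simp only [Pi.exp_def, Real.exp_eq_exp_ℝ]

theorem Matrix.sum_mul_diagonal_mul_apply [DecidableEq ι] {R : Type*} [CommSemiring R]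
    {V W : Matrix ι ι R} {c : R} (hV : ∀ k, ∑ i, V i k = c) (e : ι → R) (j : ι) :
    ∑ i, (V * diagonal e * W) i j = c * ∑ k, e k * W k j := by
  simp only [Matrix.mul_assoc, mul_apply (M := V), diagonal_mul]
  rw [sum_comm, mul_sum]
  simp_rw [← sum_mul, hV]

/-- For every `t ≥ 0` and every `j`, the distribution at time `t` of the
trap-model chain started from the uniform distribution satisfies
`(1/N) ∑ i, (exp (-t • L)) i j = ∑ k, γ k * exp (-t * lam k) / (x j - lam k)`,
where `exp` on the left is the matrix exponential, `0 = lam 0 < … < lam (N-1)` are the zeros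
of `φ` (the eigenvalues of `L`) and `γ k = (∑ j, x j / (x j - lam k)²)⁻¹`. -/
theorem rem_trap_uniform_distribution_spectral_formula
    (N : ℕ) (x : Fin N → ℝ)
    (hx_pos : ∀ i, 0 < x i)
    (L : Matrix (Fin N) (Fin N) ℝ)
    (hL : ∀ i j, L i j = if i = j then ((N - 1 : ℝ) / N) * x i else -(x i) / N)
    (lam : Fin N → ℝ) (hlam_mono : StrictMono lam)
    (hlam_ne : ∀ k j, x j ≠ lam k)
    (hlam_root : ∀ k, ∑ j : Fin N, lam k / (x j - lam k) = 0)
    (γ : Fin N → ℝ) (hγ : ∀ k, γ k = (∑ j : Fin N, x j / (x j - lam k) ^ 2)⁻¹) :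
    ∀ t : ℝ, 0 ≤ t → ∀ j : Fin N,
      (1 / (N : ℝ)) * ∑ i : Fin N, (NormedSpace.exp (-(t • L))) i j =
        ∑ k : Fin N, γ k * Real.exp (-(t * lam k)) / (x j - lam k) := by
  intro t _ j
  have hN : (N : ℝ) ≠ 0 := Nat.cast_ne_zero.mpr (Fin.pos j).ne'
  have hL' : L = trapGenerator x := by
    ext i k
    rw [hL, trapGenerator_apply, Fintype.card_fin]
  have hcol (k : Fin N) : ∑ i, trapEigenvectors x lam i k = N := by
    rw [sum_trapEigenvectors_apply (hlam_ne k), hlam_root k, add_zero, Fintype.card_fin]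
  have hLV : -(t • L) * trapEigenvectors x lam =
      trapEigenvectors x lam * diagonal fun k => -(t * lam k) := by
    rw [Matrix.neg_mul, Matrix.smul_mul, hL',
      trapGenerator_mul_trapEigenvectors hlam_ne hlam_root, ← Matrix.mul_smul, ← Matrix.mul_neg,
      ← diagonal_smul, ← diagonal_neg]
    rfl
  rw [Matrix.exp_eq_mul_diagonal_mul_of_mul_eq_mul_diagonal
      (trapDualEigenvectors_mul_trapEigenvectors hx_pos hlam_mono.injective hlam_ne hlam_root) hLV,
    Matrix.sum_mul_diagonal_mul_apply hcol, ← mul_assoc, one_div_mul_cancel hN, one_mul]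
  refine sum_congr rfl fun k _ => ?_
  rw [hγ k, trapDualEigenvectors, of_apply]
  ring
end

section
/- For every θ > 0, the function ω ↦ Π̂(θ, ω) := ∫_0^1 α x^{α−1} [ (ω + xθ + x) · ∫_0^1 ((ω + xθ)/(ω + xθ + y))·α y^{α−1} dy ]^{−1} dx is well defined (the integrands are integrable and the inner integral is nonzero) and holomorphic on ℂ ∖ (−∞, 0]. -/
open MeasureTheory Metric Set intervalIntegral

section RemTrapAux

lemma slit_add_nonneg {z : ℂ} (hz : z ∈ Complex.slitPlane) {t : ℝ} (ht : 0 ≤ t) :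
    z + (t : ℂ) ∈ Complex.slitPlane := by
  rw [Complex.mem_slitPlane_iff] at hz ⊢
  rcases hz with h | h
  · left; simp only [Complex.add_re, Complex.ofReal_re]; linarith
  · right; simpa using h

lemma weight_intInt {α : ℝ} (hα0 : 0 < α) :
    IntervalIntegrable (fun y : ℝ => ((α * y ^ (α - 1) : ℝ) : ℂ)) volume 0 1 := by
  have h : IntervalIntegrable (fun y : ℝ => α * y ^ (α - 1)) volume 0 1 :=
    (intervalIntegral.intervalIntegrable_rpow' (by linarith)).const_mul α
  rw [intervalIntegrable_iff] at h ⊢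
  exact h.ofReal

lemma cont_div {z : ℂ} (hz : z ∈ Complex.slitPlane) :
    ContinuousOn (fun y : ℝ => z / (z + (y:ℂ))) (Set.Icc 0 1) :=
  continuousOn_const.div (by fun_prop)
    (fun y hy => Complex.slitPlane_ne_zero (slit_add_nonneg hz hy.1))

lemma inner_intInt {α : ℝ} (hα0 : 0 < α) {z : ℂ} (hz : z ∈ Complex.slitPlane) :
    IntervalIntegrable (fun y : ℝ => (z / (z + (y:ℂ))) * ((α * y ^ (α - 1) : ℝ) : ℂ))
      volume 0 1 :=
  (weight_intInt hα0).continuousOn_mul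
    (by rw [Set.uIcc_of_le (zero_le_one)]; exact cont_div hz)


lemma key_intInt {α : ℝ} (hα0 : 0 < α) {z : ℂ} (hz : z ∈ Complex.slitPlane) :
    IntervalIntegrable (fun y : ℝ => (z + (y:ℂ))⁻¹ * ((α * y ^ (α - 1) : ℝ) : ℂ))
      volume 0 1 :=
  (weight_intInt hα0).continuousOn_mul <| by
    rw [Set.uIcc_of_le zero_le_one]
    exact ContinuousOn.inv₀ (by fun_prop)
      (fun y hy => Complex.slitPlane_ne_zero (slit_add_nonneg hz hy.1))

lemma inner_ne_zero {α : ℝ} (hα0 : 0 < α) {z : ℂ} (hz : z ∈ Complex.slitPlane) :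
    (∫ y in (0:ℝ)..1, (z / (z + (y:ℂ))) * ((α * y ^ (α - 1) : ℝ) : ℂ)) ≠ 0 := by
  have hzne : z ≠ 0 := Complex.slitPlane_ne_zero hz
  have hrw : (fun y : ℝ => (z / (z + (y:ℂ))) * ((α * y ^ (α - 1) : ℝ) : ℂ)) =
      fun y : ℝ => z * ((z + (y:ℂ))⁻¹ * ((α * y ^ (α - 1) : ℝ) : ℂ)) := by
    funext y; rw [div_eq_mul_inv]; ring
  rw [hrw, intervalIntegral.integral_const_mul]
  refine mul_ne_zero hzne ?_
  set f : ℝ → ℂ := fun y => (z + (y:ℂ))⁻¹ * ((α * y ^ (α - 1) : ℝ) : ℂ) with hf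
  have hfi : IntervalIntegrable f volume 0 1 := key_intInt hα0 hz
  have hne : ∀ y ∈ Set.Icc (0:ℝ) 1, z + (y:ℂ) ≠ 0 :=
    fun y hy => Complex.slitPlane_ne_zero (slit_add_nonneg hz hy.1)
  have hwpos : ∀ y ∈ Set.Ioo (0:ℝ) 1, 0 < α * y ^ (α - 1) :=
    fun y hy => mul_pos hα0 (Real.rpow_pos_of_pos hy.1 _)
  rw [Complex.mem_slitPlane_iff] at hz
  rcases hz with h | h
  · -- positive real part
    intro h0
    have hre : IntervalIntegrable (fun y => (f y).re) volume 0 1 := by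
      rw [intervalIntegrable_iff] at hfi ⊢
      exact Complex.reCLM.integrable_comp hfi
    have hpos : 0 < ∫ y in (0:ℝ)..1, (f y).re := by
      refine intervalIntegral.intervalIntegral_pos_of_pos_on hre ?_ one_pos
      intro y hy
      have hy' : z + (y:ℂ) ≠ 0 := hne y ⟨hy.1.le, hy.2.le⟩
      simp only [hf, Complex.mul_re, Complex.ofReal_re, Complex.ofReal_im, mul_zero, sub_zero,
        Complex.inv_re, Complex.add_re, Complex.ofReal_re]
      have hns : 0 < Complex.normSq (z + (y:ℂ)) := Complex.normSq_pos.mpr hy'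
      have h1 : 0 < z.re + y := by linarith [hy.1]
      exact mul_pos (div_pos h1 hns) (hwpos y hy)
    have hcomm : (∫ y in (0:ℝ)..1, (f y).re) = (∫ y in (0:ℝ)..1, f y).re :=
      Complex.reCLM.intervalIntegral_comp_comm hfi
    rw [hcomm, h0] at hpos
    simp at hpos
  · -- nonzero imaginary part
    intro h0
    have him : IntervalIntegrable (fun y => (f y).im) volume 0 1 := by
      rw [intervalIntegrable_iff] at hfi ⊢
      exact Complex.imCLM.integrable_comp hfi
    have himval : ∀ y ∈ Set.Ioo (0:ℝ) 1,
        (f y).im = (-z.im / Complex.normSq (z + (y:ℂ))) * (α * y ^ (α - 1)) := by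
      intro y hy
      simp [hf, Complex.mul_im, Complex.inv_im, Complex.add_im, Complex.inv_re]
    have hcomm : (∫ y in (0:ℝ)..1, (f y).im) = (∫ y in (0:ℝ)..1, f y).im :=
      Complex.imCLM.intervalIntegral_comp_comm hfi
    rcases h.lt_or_gt with hlt | hgt
    · -- z.im < 0 : im part positive
      have hpos : 0 < ∫ y in (0:ℝ)..1, (f y).im := by
        refine intervalIntegral.intervalIntegral_pos_of_pos_on him ?_ one_pos
        intro y hy
        rw [himval y hy]
        have hns : 0 < Complex.normSq (z + (y:ℂ)) :=
          Complex.normSq_pos.mpr (hne y ⟨hy.1.le, hy.2.le⟩)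
        exact mul_pos (div_pos (by linarith) hns) (hwpos y hy)
      rw [hcomm, h0] at hpos; simp at hpos
    · -- z.im > 0 : im part negative
      have hpos : 0 < ∫ y in (0:ℝ)..1, -(f y).im := by
        refine intervalIntegral.intervalIntegral_pos_of_pos_on him.neg ?_ one_pos
        intro y hy
        rw [himval y hy]
        have hns : 0 < Complex.normSq (z + (y:ℂ)) :=
          Complex.normSq_pos.mpr (hne y ⟨hy.1.le, hy.2.le⟩)
        have := mul_pos (div_pos (show (0:ℝ) < z.im from hgt) hns) (hwpos y hy)
        have heq : -(-z.im / Complex.normSq (z + (y:ℂ)) * (α * y ^ (α - 1)))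
            = z.im / Complex.normSq (z + (y:ℂ)) * (α * y ^ (α - 1)) := by ring
        rw [heq]; exact this
      rw [intervalIntegral.integral_neg, hcomm, h0] at hpos; simp at hpos


noncomputable def innerInt (α : ℝ) (z : ℂ) : ℂ :=
  ∫ y in (0:ℝ)..1, (z / (z + (y:ℂ))) * ((α * y ^ (α - 1) : ℝ) : ℂ)

lemma aesm_of_contOn {g : ℝ → ℂ} (hg : ContinuousOn g (Set.Ioc 0 1)) :
    AEStronglyMeasurable g (volume.restrict (Set.uIoc (0:ℝ) 1)) := by
  rw [Set.uIoc_of_le zero_le_one]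
  exact hg.aestronglyMeasurable measurableSet_Ioc

lemma weight_contOn {α : ℝ} :
    ContinuousOn (fun y : ℝ => ((α * y ^ (α - 1) : ℝ) : ℂ)) (Set.Ioc 0 1) := by
  apply Complex.continuous_ofReal.comp_continuousOn
  exact continuousOn_const.mul (continuousOn_id.rpow_const (fun y hy => Or.inl (ne_of_gt hy.1)))

lemma exists_norm_lb {ε : ℝ} (hε : 0 < ε) {z₀ : ℂ} (hball : closedBall z₀ ε ⊆ Complex.slitPlane) :
    ∃ m > 0, ∀ z ∈ closedBall z₀ ε, ∀ y ∈ Set.Icc (0:ℝ) 1, m ≤ ‖z + (y:ℂ)‖ := by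
  have hS : IsCompact ((closedBall z₀ ε) ×ˢ (Set.Icc (0:ℝ) 1)) :=
    (isCompact_closedBall _ _).prod isCompact_Icc
  have hSne : ((closedBall z₀ ε) ×ˢ (Set.Icc (0:ℝ) 1)).Nonempty :=
    ⟨(z₀, 0), by simp [hε.le]⟩
  obtain ⟨p₀, hp₀, hmin⟩ := hS.exists_isMinOn hSne
    (Continuous.continuousOn (by fun_prop : Continuous fun p : ℂ × ℝ => ‖p.1 + (p.2:ℂ)‖))
  refine ⟨‖p₀.1 + (p₀.2:ℂ)‖, ?_, fun z hz y hy => isMinOn_iff.mp hmin (z,y) (Set.mk_mem_prod hz hy)⟩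
  exact norm_pos_iff.mpr <| Complex.slitPlane_ne_zero
    (slit_add_nonneg (hball (Set.mem_prod.mp hp₀).1) (Set.mem_prod.mp hp₀).2.1)

lemma exists_closedBall_subset {z₀ : ℂ} (hz₀ : z₀ ∈ Complex.slitPlane) :
    ∃ ε > 0, closedBall z₀ ε ⊆ Complex.slitPlane := by
  obtain ⟨ε, hε, h⟩ := Metric.isOpen_iff.mp Complex.isOpen_slitPlane z₀ hz₀
  exact ⟨ε/2, by linarith, fun w hw =>
    h (lt_of_le_of_lt (mem_closedBall.mp hw) (by linarith))⟩

lemma innerInt_hasDerivAt {α : ℝ} (hα0 : 0 < α) {z₀ : ℂ} (hz₀ : z₀ ∈ Complex.slitPlane) :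
    ∃ d, HasDerivAt (innerInt α) d z₀ := by
  obtain ⟨ε, hε, hball⟩ := exists_closedBall_subset hz₀
  obtain ⟨m, hm, hlb⟩ := exists_norm_lb hε hball
  have hne : ∀ z ∈ closedBall z₀ ε, ∀ y ∈ Set.Icc (0:ℝ) 1, z + (y:ℂ) ≠ 0 :=
    fun z hz y hy => Complex.slitPlane_ne_zero (slit_add_nonneg (hball hz) hy.1)
  have key := hasDerivAt_integral_of_dominated_loc_of_deriv_le
    (F := fun (z : ℂ) (y : ℝ) => (z / (z + (y:ℂ))) * ((α * y ^ (α - 1) : ℝ) : ℂ))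
    (F' := fun (z : ℂ) (y : ℝ) => ((y:ℂ) / (z + (y:ℂ))^2) * ((α * y ^ (α - 1) : ℝ) : ℂ))
    (bound := fun y => m⁻¹^2 * (α * y ^ (α - 1))) (Metric.ball_mem_nhds _ hε)
    ?hmeas (inner_intInt hα0 hz₀) ?hmeas' ?hbound ?hbd_int ?hdiff
  · exact ⟨_, key.2⟩
  case hmeas =>
    filter_upwards [Complex.isOpen_slitPlane.eventually_mem hz₀] with z hz
    exact aesm_of_contOn <| ContinuousOn.mul (continuousOn_const.div (by fun_prop)
      (fun y hy => Complex.slitPlane_ne_zero (slit_add_nonneg hz hy.1.le))) weight_contOn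
  case hmeas' =>
    refine aesm_of_contOn <| ContinuousOn.mul (ContinuousOn.div
      (Complex.continuous_ofReal.continuousOn) (by fun_prop) ?_) weight_contOn
    exact fun y hy => pow_ne_zero 2 (hne z₀ (mem_closedBall_self hε.le) y ⟨hy.1.le, hy.2⟩)
  case hbound =>
    refine Filter.Eventually.of_forall (fun y hy z hz => ?_)
    rw [Set.uIoc_of_le zero_le_one] at hy
    have hwpos : 0 < α * y ^ (α - 1) := mul_pos hα0 (Real.rpow_pos_of_pos hy.1 _)
    have h1 : ‖((y:ℂ) / (z + (y:ℂ))^2) * ((α * y ^ (α - 1) : ℝ) : ℂ)‖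
        = y / ‖z + (y:ℂ)‖^2 * (α * y ^ (α - 1)) := by
      simp only [norm_mul, norm_div, Complex.norm_real, norm_pow]
      rw [Real.norm_of_nonneg hy.1.le, Real.norm_of_nonneg hα0.le,
        Real.norm_of_nonneg (Real.rpow_pos_of_pos hy.1 _).le]
    rw [h1]
    have hmle := hlb z (ball_subset_closedBall hz) y ⟨hy.1.le, hy.2⟩
    have hsq : m^2 ≤ ‖z + (y:ℂ)‖^2 := pow_le_pow_left₀ hm.le hmle 2
    have h2 : y / ‖z + (y:ℂ)‖^2 ≤ m⁻¹^2 := by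
      rw [inv_pow, inv_eq_one_div]
      exact div_le_div₀ zero_le_one hy.2 (pow_pos hm 2) hsq
    exact mul_le_mul_of_nonneg_right h2 hwpos.le
  case hbd_int =>
    exact ((intervalIntegral.intervalIntegrable_rpow' (by linarith)).const_mul
      α).const_mul _
  case hdiff =>
    refine Filter.Eventually.of_forall (fun y hy z hz => ?_)
    rw [Set.uIoc_of_le zero_le_one] at hy
    have hzy : z + (y:ℂ) ≠ 0 :=
      hne z (ball_subset_closedBall hz) y ⟨hy.1.le, hy.2⟩
    have hd := ((hasDerivAt_id z).div ((hasDerivAt_id z).add_const ((y:ℝ):ℂ)) hzy).mul_const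
      ((α * y ^ (α - 1) : ℝ) : ℂ)
    convert hd using 1
    · rfl
    · rfl
    · simp only [id_eq]; ring


lemma slit_add_mul {ω : ℂ} (hω : ω ∈ Complex.slitPlane) {x t : ℝ} (hx : 0 ≤ x) (ht : 0 ≤ t) :
    ω + (x:ℂ) * (t:ℂ) ∈ Complex.slitPlane := by
  rw [← Complex.ofReal_mul]; exact slit_add_nonneg hω (mul_nonneg hx ht)

lemma innerInt_ne_zero {α : ℝ} (hα0 : 0 < α) {z : ℂ} (hz : z ∈ Complex.slitPlane) :
    innerInt α z ≠ 0 := inner_ne_zero hα0 hz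

lemma innerInt_diffOn {α : ℝ} (hα0 : 0 < α) :
    DifferentiableOn ℂ (innerInt α) Complex.slitPlane := fun z hz => by
  obtain ⟨d, hd⟩ := innerInt_hasDerivAt hα0 hz
  exact hd.differentiableAt.differentiableWithinAt

lemma innerInt_contOn {α : ℝ} (hα0 : 0 < α) :
    ContinuousOn (innerInt α) Complex.slitPlane := (innerInt_diffOn hα0).continuousOn

lemma innerInt_deriv_contOn {α : ℝ} (hα0 : 0 < α) :
    ContinuousOn (deriv (innerInt α)) Complex.slitPlane :=
  (((innerInt_diffOn hα0).analyticOnNhd Complex.isOpen_slitPlane).deriv).continuousOn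

lemma innerInt_comp_hasDerivAt {α : ℝ} (hα0 : 0 < α) {ω s : ℂ}
    (h : ω + s ∈ Complex.slitPlane) :
    HasDerivAt (fun ω : ℂ => innerInt α (ω + s)) (deriv (innerInt α) (ω + s)) ω := by
  obtain ⟨d, hd⟩ := innerInt_hasDerivAt hα0 h
  have hd' : HasDerivAt (innerInt α) (deriv (innerInt α) (ω + s)) (ω + s) := by
    rwa [hd.deriv]
  simpa [Function.comp_def] using
    (hd'.comp ω ((hasDerivAt_id ω).add_const s))

lemma outer_intInt {α : ℝ} (hα0 : 0 < α) {θ : ℝ} (hθ : 0 < θ) {ω : ℂ}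
    (hω : ω ∈ Complex.slitPlane) :
    IntervalIntegrable (fun x : ℝ => ((α * x ^ (α - 1) : ℝ) : ℂ) *
      ((ω + (x:ℂ) * (θ:ℂ) + (x:ℂ)) * innerInt α (ω + (x:ℂ) * (θ:ℂ)))⁻¹) volume 0 1 := by
  refine (weight_intInt hα0).mul_continuousOn ?_
  rw [Set.uIcc_of_le zero_le_one]
  have hmemb : ∀ x ∈ Set.Icc (0:ℝ) 1, ω + (x:ℂ) * (θ:ℂ) ∈ Complex.slitPlane :=
    fun x hx => slit_add_mul hω hx.1 hθ.le
  refine ContinuousOn.inv₀ (ContinuousOn.mul (by fun_prop) ?_) ?_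
  · exact (innerInt_contOn hα0).comp (by fun_prop) hmemb
  · intro x hx
    exact mul_ne_zero (Complex.slitPlane_ne_zero (slit_add_nonneg (hmemb x hx) hx.1))
      (innerInt_ne_zero hα0 (hmemb x hx))


lemma outer_diffOn {α : ℝ} (hα0 : 0 < α) {θ : ℝ} (hθ : 0 < θ) :
    DifferentiableOn ℂ (fun ω : ℂ => ∫ x in (0:ℝ)..1, ((α * x ^ (α - 1) : ℝ) : ℂ) *
      ((ω + (x:ℂ) * (θ:ℂ) + (x:ℂ)) * innerInt α (ω + (x:ℂ) * (θ:ℂ)))⁻¹)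
      Complex.slitPlane := by
  intro ω₀ hω₀
  obtain ⟨ε, hε, hball⟩ := exists_closedBall_subset hω₀
  set P : ℂ × ℝ → ℂ := fun p => p.1 + (p.2:ℂ) * (θ:ℂ) + (p.2:ℂ) with hP
  set Q : ℂ × ℝ → ℂ := fun p => innerInt α (p.1 + (p.2:ℂ) * (θ:ℂ)) with hQ
  set D : ℂ × ℝ → ℂ := fun p => deriv (innerInt α) (p.1 + (p.2:ℂ) * (θ:ℂ)) with hD
  set Φ : ℂ × ℝ → ℂ := fun p => -(1 * Q p + P p * D p) / (P p * Q p) ^ 2 with hΦ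
  set S : Set (ℂ × ℝ) := closedBall ω₀ ε ×ˢ Set.Icc (0:ℝ) 1 with hS
  have hSc : IsCompact S := (isCompact_closedBall _ _).prod isCompact_Icc
  have hSne : S.Nonempty := ⟨(ω₀, 0), by simp [hS, hε.le]⟩
  have hmems : ∀ p ∈ S, p.1 + (p.2:ℂ) * (θ:ℂ) ∈ Complex.slitPlane := by
    intro p hp
    exact slit_add_mul (hball hp.1) hp.2.1 hθ.le
  have hPne : ∀ p ∈ S, P p ≠ 0 := fun p hp =>
    Complex.slitPlane_ne_zero (slit_add_nonneg (hmems p hp) hp.2.1)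
  have hQne : ∀ p ∈ S, Q p ≠ 0 := fun p hp => innerInt_ne_zero hα0 (hmems p hp)
  have hmap : ContinuousOn (fun p : ℂ × ℝ => p.1 + (p.2:ℂ) * (θ:ℂ)) S := by fun_prop
  have hQc : ContinuousOn Q S := (innerInt_contOn hα0).comp hmap hmems
  have hDc : ContinuousOn D S := (innerInt_deriv_contOn hα0).comp hmap hmems
  have hPc : ContinuousOn P S := by fun_prop
  have hΦc : ContinuousOn Φ S := by
    refine ContinuousOn.div ((continuousOn_const.mul hQc).add (hPc.mul hDc)).neg
      ((hPc.mul hQc).pow 2) ?_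
    exact fun p hp => pow_ne_zero 2 (mul_ne_zero (hPne p hp) (hQne p hp))
  obtain ⟨p₀, _, hmax⟩ := hSc.exists_isMaxOn hSne hΦc.norm
  set C : ℝ := ‖Φ p₀‖ with hC
  have key := hasDerivAt_integral_of_dominated_loc_of_deriv_le
    (F := fun (ω : ℂ) (x : ℝ) => ((α * x ^ (α - 1) : ℝ) : ℂ) *
      ((ω + (x:ℂ) * (θ:ℂ) + (x:ℂ)) * innerInt α (ω + (x:ℂ) * (θ:ℂ)))⁻¹)
    (F' := fun (ω : ℂ) (x : ℝ) => ((α * x ^ (α - 1) : ℝ) : ℂ) * Φ (ω, x))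
    (bound := fun x => C * (α * x ^ (α - 1))) (Metric.ball_mem_nhds _ hε)
    ?hmeas (outer_intInt hα0 hθ hω₀) ?hmeas' ?hbound ?hbd_int ?hdiff
  · exact key.2.differentiableAt.differentiableWithinAt
  case hmeas =>
    filter_upwards [Complex.isOpen_slitPlane.eventually_mem hω₀] with ω hω
    have h := outer_intInt (θ := θ) hα0 hθ hω
    rw [intervalIntegrable_iff] at h
    exact h.aestronglyMeasurable
  case hmeas' =>
    refine aesm_of_contOn (weight_contOn.mul ?_)
    refine hΦc.comp (by fun_prop) (fun x hx => ?_)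
    exact Set.mk_mem_prod (mem_closedBall_self hε.le) ⟨hx.1.le, hx.2⟩
  case hbound =>
    refine Filter.Eventually.of_forall (fun x hx ω hω => ?_)
    rw [Set.uIoc_of_le zero_le_one] at hx
    have hwpos : 0 < α * x ^ (α - 1) := mul_pos hα0 (Real.rpow_pos_of_pos hx.1 _)
    have hmem : (ω, x) ∈ S :=
      Set.mk_mem_prod (ball_subset_closedBall hω) ⟨hx.1.le, hx.2⟩
    have h1 : ‖((α * x ^ (α - 1) : ℝ) : ℂ) * Φ (ω, x)‖
        = (α * x ^ (α - 1)) * ‖Φ (ω, x)‖ := by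
      rw [norm_mul, Complex.norm_real, Real.norm_of_nonneg hwpos.le]
    rw [h1]
    have h2 : ‖Φ (ω, x)‖ ≤ C := hmax hmem
    show α * x ^ (α - 1) * ‖Φ (ω, x)‖ ≤ C * (α * x ^ (α - 1))
    nlinarith [norm_nonneg (Φ (ω, x))]
  case hbd_int =>
    exact ((intervalIntegral.intervalIntegrable_rpow' (by linarith)).const_mul α).const_mul _
  case hdiff =>
    refine Filter.Eventually.of_forall (fun x hx ω hω => ?_)
    rw [Set.uIoc_of_le zero_le_one] at hx
    have hmem : (ω, x) ∈ S :=
      Set.mk_mem_prod (ball_subset_closedBall hω) ⟨hx.1.le, hx.2⟩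
    have hslit : ω + (x:ℂ) * (θ:ℂ) ∈ Complex.slitPlane := hmems (ω, x) hmem
    have hPd : HasDerivAt (fun ω : ℂ => ω + (x:ℂ) * (θ:ℂ) + (x:ℂ)) 1 ω :=
      ((hasDerivAt_id ω).add_const ((x:ℂ) * (θ:ℂ))).add_const (x:ℂ)
    have hQd : HasDerivAt (fun ω : ℂ => innerInt α (ω + (x:ℂ) * (θ:ℂ)))
        (deriv (innerInt α) (ω + (x:ℂ) * (θ:ℂ))) ω := innerInt_comp_hasDerivAt hα0 hslit
    have hPQd := hPd.mul hQd
    have hne : P (ω, x) * Q (ω, x) ≠ 0 := mul_ne_zero (hPne _ hmem) (hQne _ hmem)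
    exact (hPQd.inv hne).const_mul _

end RemTrapAux

/-- For every `θ > 0`, the function
`ω ↦ Π̂(θ, ω) = ∫_0^1 α x^(α-1) [ (ω + xθ + x) ∫_0^1 (ω + xθ)/(ω + xθ + y) α y^(α-1) dy ]⁻¹ dx`
is well defined (the integrands are integrable and the inner integral is nonzero) and
holomorphic on `ℂ ∖ (-∞, 0]` (the slit plane). -/
theorem rem_trap_laplace_transform_holomorphic
    (α : ℝ) (hα0 : 0 < α) (hα1 : α < 1) (θ : ℝ) (hθ : 0 < θ) :
    (∀ ω ∈ Complex.slitPlane, ∀ x ∈ Set.Ioc (0 : ℝ) 1,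
      IntervalIntegrable
        (fun y : ℝ => ((ω + x * θ) / (ω + x * θ + y)) * ((α * y ^ (α - 1) : ℝ) : ℂ))
        volume 0 1 ∧
      (∫ y in (0:ℝ)..1,
          ((ω + x * θ) / (ω + x * θ + y)) * ((α * y ^ (α - 1) : ℝ) : ℂ)) ≠ 0) ∧
    (∀ ω ∈ Complex.slitPlane,
      IntervalIntegrable
        (fun x : ℝ => ((α * x ^ (α - 1) : ℝ) : ℂ) *
          ((ω + x * θ + x) *
            ∫ y in (0:ℝ)..1,
              ((ω + x * θ) / (ω + x * θ + y)) * ((α * y ^ (α - 1) : ℝ) : ℂ))⁻¹)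
        volume 0 1) ∧
    DifferentiableOn ℂ
      (fun ω : ℂ =>
        ∫ x in (0:ℝ)..1, ((α * x ^ (α - 1) : ℝ) : ℂ) *
          ((ω + x * θ + x) *
            ∫ y in (0:ℝ)..1,
              ((ω + x * θ) / (ω + x * θ + y)) * ((α * y ^ (α - 1) : ℝ) : ℂ))⁻¹)
      Complex.slitPlane := by
  refine ⟨?_, ?_, ?_⟩
  · intro ω hω x hx
    have hz : ω + (x:ℂ) * (θ:ℂ) ∈ Complex.slitPlane := slit_add_mul hω hx.1.le hθ.le
    exact ⟨inner_intInt hα0 hz, inner_ne_zero hα0 hz⟩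
  · intro ω hω
    exact outer_intInt hα0 hθ hω
  · exact outer_diffOn hα0 hθ
end

section
/- The function f(θ) := (sin(πα)/π)·∫_{θ/(1+θ)}^1 u^{−α}(1−u)^{α−1} du, θ ≥ 0, satisfies: f(0) = 1; f is infinitely differentiable on (0, ∞) with f′(θ) = −(sin(πα)/π)·θ^{−α}·(1+θ)^{−1}; and f is completely monotone, i.e. (−1)^n f^{(n)}(θ) ≥ 0 for every integer n ≥ 0 and every θ > 0. -/
open MeasureTheory
set_option maxHeartbeats 1000000


private lemma age_int01 {α : ℝ} (hα0 : 0 < α) (hα1 : α < 1) :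
    IntervalIntegrable (fun u : ℝ => u ^ (-α) * (1 - u) ^ (α - 1)) volume 0 1 := by
  have h := Complex.betaIntegral_convergent (u := 1 - (α:ℂ)) (v := (α:ℂ))
    (by simp [hα1]) (by simpa using hα0)
  rw [intervalIntegrable_iff_integrableOn_Ioc_of_le zero_le_one] at h ⊢
  have h2 := h.re
  apply h2.congr
  refine (ae_restrict_iff' measurableSet_Ioc).2 (Filter.Eventually.of_forall fun x hx => ?_)
  have hx0 : (0:ℝ) ≤ x := le_of_lt hx.1
  have hx1 : (0:ℝ) ≤ 1 - x := by linarith [hx.2]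
  have e1 : (1 - (α:ℂ)) - 1 = ((-α : ℝ) : ℂ) := by push_cast; ring
  have e2 : (α:ℂ) - 1 = ((α - 1 : ℝ) : ℂ) := by push_cast; ring
  have e3 : 1 - (x:ℂ) = ((1 - x : ℝ) : ℂ) := by push_cast; ring
  simp only [e1, e2, e3, ← Complex.ofReal_cpow hx0, ← Complex.ofReal_cpow hx1,
    ← Complex.ofReal_mul]
  simp [RCLike.re]

private lemma age_beta {α : ℝ} (hα0 : 0 < α) (hα1 : α < 1) :
    ∫ u in (0:ℝ)..1, u ^ (-α) * (1 - u) ^ (α - 1) = Real.pi / Real.sin (Real.pi * α) := by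
  have hI : Complex.betaIntegral (1 - α) α
      = ((∫ u in (0:ℝ)..1, u ^ (-α) * (1 - u) ^ (α - 1) : ℝ) : ℂ) := by
    rw [Complex.betaIntegral, ← intervalIntegral.integral_ofReal]
    apply intervalIntegral.integral_congr
    intro x hx
    rw [Set.uIcc_of_le zero_le_one] at hx
    have hx0 : (0:ℝ) ≤ x := hx.1
    have hx1 : (0:ℝ) ≤ 1 - x := by linarith [hx.2]
    have e1 : (1 - (α:ℂ)) - 1 = ((-α : ℝ) : ℂ) := by push_cast; ring
    have e2 : (α:ℂ) - 1 = ((α - 1 : ℝ) : ℂ) := by push_cast; ring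
    have e3 : 1 - (x:ℂ) = ((1 - x : ℝ) : ℂ) := by push_cast; ring
    simp only [e1, e2, e3, ← Complex.ofReal_cpow hx0, ← Complex.ofReal_cpow hx1,
      ← Complex.ofReal_mul]
  have hB : Complex.betaIntegral (1 - α) α = ((Real.pi / Real.sin (Real.pi * α) : ℝ) : ℂ) := by
    have h1 := Complex.Gamma_mul_Gamma_eq_betaIntegral
      (s := 1 - (α:ℂ)) (t := (α:ℂ)) (by simp [hα1]) (by simpa using hα0)
    rw [show (1 - (α:ℂ)) + α = 1 by ring, Complex.Gamma_one, one_mul] at h1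
    rw [← h1, mul_comm, Complex.Gamma_mul_Gamma_one_sub]
    rw [show ((Real.pi:ℂ) * (α:ℂ)) = ((Real.pi * α : ℝ) : ℂ) by push_cast; ring,
      ← Complex.ofReal_sin, ← Complex.ofReal_div]
  rw [hI] at hB
  exact_mod_cast hB


private lemma age_hasDerivAt {α : ℝ} (hα0 : 0 < α) (hα1 : α < 1) {θ : ℝ} (hθ : 0 < θ) :
    HasDerivAt (fun t : ℝ => ∫ u in (t / (1 + t))..1, u ^ (-α) * (1 - u) ^ (α - 1))
      (-(θ ^ (-α) * (1 + θ)⁻¹)) θ := by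
  set φ : ℝ → ℝ := fun u => u ^ (-α) * (1 - u) ^ (α - 1) with hφ
  have h1θ : 0 < 1 + θ := by linarith
  set s : ℝ := θ / (1 + θ) with hsdef
  have hs0 : 0 < s := div_pos hθ h1θ
  have hs1 : s < 1 := (div_lt_one h1θ).2 (by linarith)
  have hint : IntervalIntegrable φ volume s 1 := by
    apply (age_int01 hα0 hα1).mono_set
    rw [Set.uIcc_of_le hs1.le, Set.uIcc_of_le zero_le_one]
    exact Set.Icc_subset_Icc hs0.le le_rfl
  have hcont : ∀ x ∈ Set.Ioo (0:ℝ) 1, ContinuousAt φ x := by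
    intro x hx
    exact (Real.continuousAt_rpow_const x _ (Or.inl hx.1.ne')).mul
      ((continuousAt_const.sub continuousAt_id).rpow_const
        (Or.inl (by simp; linarith [hx.2])))
  have hmeas : StronglyMeasurableAtFilter φ (nhds s) volume :=
    ContinuousAt.stronglyMeasurableAtFilter isOpen_Ioo hcont s ⟨hs0, hs1⟩
  have hF : HasDerivAt (fun a => ∫ u in a..1, φ u) (-φ s) s :=
    intervalIntegral.integral_hasDerivAt_left hint hmeas (hcont s ⟨hs0, hs1⟩)
  have hd : HasDerivAt (fun t : ℝ => 1 + t) 1 θ := by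
    simpa using (hasDerivAt_id θ).const_add (1:ℝ)
  have hsder : HasDerivAt (fun t : ℝ => t / (1 + t)) ((1 * (1 + θ) - θ * 1) / (1 + θ) ^ 2) θ :=
    (hasDerivAt_id θ).div hd h1θ.ne'
  have hcomp := hF.comp θ hsder
  have e1 : (1:ℝ) - s = (1 + θ)⁻¹ := by rw [hsdef]; field_simp; ring
  have e2 : s ^ (-α) = θ ^ (-α) * (1 + θ) ^ α := by
    rw [hsdef, Real.div_rpow hθ.le h1θ.le, Real.rpow_neg h1θ.le, div_eq_mul_inv, inv_inv]
  have e3 : ((1 + θ)⁻¹ : ℝ) ^ (α - 1) = (1 + θ) ^ (1 - α) := by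
    rw [Real.inv_rpow h1θ.le, ← Real.rpow_neg h1θ.le, neg_sub]
  have e4 : (1 + θ) ^ α * (1 + θ) ^ (1 - α) = 1 + θ := by
    rw [← Real.rpow_add h1θ]; norm_num
  have hval : -φ s * ((1 * (1 + θ) - θ * 1) / (1 + θ) ^ 2) = -(θ ^ (-α) * (1 + θ)⁻¹) := by
    rw [hφ]
    simp only []
    rw [e1, e2, e3]
    have e5 : θ ^ (-α) * (1 + θ) ^ α * ((1 + θ) ^ (1 - α)) = θ ^ (-α) * (1 + θ) := by
      rw [mul_assoc, e4]
    rw [e5]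
    field_simp
    ring
  rw [hval] at hcomp
  exact hcomp


private inductive AgeCone (α : ℝ) : (ℝ → ℝ) → Prop
  | base (i j : ℕ) : AgeCone α (fun θ => θ ^ (-α - i) * (1 + θ) ^ (-1 - j : ℝ))
  | smul (t : ℝ) (ht : 0 ≤ t) {g : ℝ → ℝ} (hg : AgeCone α g) : AgeCone α (fun θ => t * g θ)
  | add {g h : ℝ → ℝ} (hg : AgeCone α g) (hh : AgeCone α h) : AgeCone α (fun θ => g θ + h θ)

private lemma ageCone_nonneg {α : ℝ} {g : ℝ → ℝ} (hg : AgeCone α g) :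
    ∀ θ : ℝ, 0 < θ → 0 ≤ g θ := by
  induction hg with
  | base i j =>
    intro θ hθ
    have h1 : (0:ℝ) < 1 + θ := by linarith
    exact mul_nonneg (Real.rpow_nonneg hθ.le _) (Real.rpow_nonneg h1.le _)
  | smul t ht hg ih => exact fun θ hθ => mul_nonneg ht (ih θ hθ)
  | add hg hh ihg ihh => exact fun θ hθ => add_nonneg (ihg θ hθ) (ihh θ hθ)

private lemma ageCone_deriv {α : ℝ} (hα0 : 0 < α) {g : ℝ → ℝ} (hg : AgeCone α g) :
    ∃ g' : ℝ → ℝ, AgeCone α g' ∧ ∀ θ : ℝ, 0 < θ → HasDerivAt g (-g' θ) θ := by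
  induction hg with
  | base i j =>
    refine ⟨fun θ => (α + i) * (θ ^ (-α - (i + 1 : ℕ)) * (1 + θ) ^ (-1 - (j : ℝ)))
        + (1 + j) * (θ ^ (-α - (i : ℕ)) * (1 + θ) ^ (-1 - ((j + 1 : ℕ) : ℝ))),
      AgeCone.add (AgeCone.smul _ (by positivity) (AgeCone.base (i+1) j))
        (AgeCone.smul _ (by positivity) (AgeCone.base i (j+1))), ?_⟩
    intro θ hθ
    have h1θ : (0:ℝ) < 1 + θ := by linarith
    have hp : HasDerivAt (fun θ : ℝ => θ ^ (-α - i)) ((-α - i) * θ ^ (-α - i - 1)) θ :=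
      Real.hasDerivAt_rpow_const (Or.inl hθ.ne')
    have hq0 : HasDerivAt (fun x : ℝ => x ^ (-1 - (j:ℝ)))
        ((-1 - (j:ℝ)) * (1 + θ) ^ (-1 - (j:ℝ) - 1)) (1 + θ) :=
      Real.hasDerivAt_rpow_const (Or.inl h1θ.ne')
    have hq : HasDerivAt (fun θ : ℝ => (1 + θ) ^ (-1 - (j:ℝ)))
        ((-1 - (j:ℝ)) * (1 + θ) ^ (-1 - (j:ℝ) - 1)) θ := by
      have h := hq0.comp θ ((hasDerivAt_id θ).const_add (1:ℝ))
      rw [mul_one] at h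
      exact h
    have hm : HasDerivAt _ _ θ := hp.mul hq
    refine hm.congr_deriv ?_
    have c1 : -α - ((i + 1 : ℕ) : ℝ) = -α - i - 1 := by push_cast; ring
    have c2 : -1 - (((j + 1 : ℕ)) : ℝ) = -1 - (j:ℝ) - 1 := by push_cast; ring
    rw [c1, c2]
    push_cast
    ring
  | smul t ht hg ih =>
    obtain ⟨g', hg', hd⟩ := ih
    refine ⟨fun θ => t * g' θ, AgeCone.smul t ht hg', fun θ hθ => ?_⟩
    simpa [mul_neg, neg_mul] using (hd θ hθ).const_mul t
  | add hg hh ihg ihh =>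
    obtain ⟨g', hg', hdg⟩ := ihg
    obtain ⟨h', hh', hdh⟩ := ihh
    refine ⟨fun θ => g' θ + h' θ, AgeCone.add hg' hh', fun θ hθ => ?_⟩
    have : HasDerivAt _ _ θ := (hdg θ hθ).add (hdh θ hθ)
    refine this.congr_deriv ?_
    ring


private lemma age_cov {α : ℝ} (hα0 : 0 < α) (hα1 : α < 1) {θ : ℝ} (hθ : 0 < θ) :
    ∫ u in (θ / (1 + θ))..1, u ^ (-α) * (1 - u) ^ (α - 1)
      = θ ^ (1 - α) * ∫ v in (0:ℝ)..1, v ^ (α - 1) * (θ + v)⁻¹ := by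
  have h1θ : (0:ℝ) < 1 + θ := by linarith
  set s : ℝ := θ / (1 + θ) with hsdef
  have hs0 : 0 < s := div_pos hθ h1θ
  have hs1 : s < 1 := (div_lt_one h1θ).2 (by linarith)
  set k : ℝ → ℝ := fun v => θ / (θ + v) with hkdef
  have hden : ∀ v : ℝ, 0 ≤ v → (0:ℝ) < θ + v := fun v hv => by linarith
  -- image of Ioo 0 1 under k
  have himg : k '' Set.Ioo 0 1 = Set.Ioo s 1 := by
    ext u
    constructor
    · rintro ⟨v, hv, rfl⟩
      have hdv := hden v hv.1.le
      constructor
      · rw [hsdef, div_lt_div_iff₀ h1θ hdv]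
        nlinarith [hv.2]
      · rw [hkdef]
        simp only []
        rw [div_lt_one hdv]
        linarith [hv.1]
    · intro hu
      have hu0 : 0 < u := lt_trans hs0 hu.1
      have hu1 : 0 < 1 - u := by linarith [hu.2]
      refine ⟨θ * (1 - u) / u, ⟨div_pos (mul_pos hθ hu1) hu0, ?_⟩, ?_⟩
      · rw [div_lt_one hu0]
        have := hu.1
        rw [hsdef, div_lt_iff₀ h1θ] at this
        nlinarith
      · rw [hkdef]
        simp only []
        have h5 : 0 < θ + θ * (1 - u) / u := by
          have := div_pos (mul_pos hθ hu1) hu0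
          linarith
        rw [div_eq_iff h5.ne']
        field_simp
        ring
  have hder : ∀ v ∈ Set.Ioo (0:ℝ) 1, HasDerivWithinAt k (-θ / (θ + v) ^ 2) (Set.Ioo 0 1) v := by
    intro v hv
    have hdv := hden v hv.1.le
    have hd : HasDerivAt (fun v : ℝ => θ + v) 1 v := (hasDerivAt_id v).const_add θ
    have := (hasDerivAt_const v θ).div hd hdv.ne'
    have h2 : (0 * (θ + v) - θ * 1) / (θ + v) ^ 2 = -θ / (θ + v) ^ 2 := by ring
    rw [h2] at this
    exact this.hasDerivWithinAt
  have hinj : Set.InjOn k (Set.Ioo 0 1) := by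
    intro a ha b hb hab
    have hda := hden a ha.1.le
    have hdb := hden b hb.1.le
    rw [hkdef] at hab
    simp only [] at hab
    rw [div_eq_div_iff hda.ne' hdb.ne'] at hab
    nlinarith
  have hcov := integral_image_eq_integral_abs_deriv_smul measurableSet_Ioo hder hinj
    (fun u => u ^ (-α) * (1 - u) ^ (α - 1))
  rw [himg] at hcov
  have hL : ∫ u in s..1, u ^ (-α) * (1 - u) ^ (α - 1)
      = ∫ u in Set.Ioo s 1, u ^ (-α) * (1 - u) ^ (α - 1) := by
    rw [intervalIntegral.integral_of_le hs1.le, integral_Ioc_eq_integral_Ioo]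
  have hptwise : ∀ v ∈ Set.Ioo (0:ℝ) 1,
      |(-θ / (θ + v) ^ 2)| • ((k v) ^ (-α) * (1 - k v) ^ (α - 1))
        = θ ^ (1 - α) * (v ^ (α - 1) * (θ + v)⁻¹) := by
    intro v hv
    have hdv := hden v hv.1.le
    have habs : |(-θ / (θ + v) ^ 2)| = θ / (θ + v) ^ 2 := by
      rw [abs_div, abs_neg, abs_of_pos hθ, abs_of_pos (by positivity)]
    have e1 : 1 - k v = v / (θ + v) := by rw [hkdef]; field_simp; ring
    have e2 : (k v) ^ (-α) = θ ^ (-α) * (θ + v) ^ α := by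
      rw [hkdef]
      simp only []
      rw [Real.div_rpow hθ.le hdv.le, Real.rpow_neg hdv.le, div_eq_mul_inv, inv_inv]
    have e3 : (v / (θ + v)) ^ (α - 1) = v ^ (α - 1) * ((θ + v) ^ (α - 1))⁻¹ := by
      rw [Real.div_rpow hv.1.le hdv.le, div_eq_mul_inv]
    have e4 : (θ + v) ^ α * ((θ + v) ^ (α - 1))⁻¹ = θ + v := by
      rw [← div_eq_mul_inv, ← Real.rpow_sub hdv]
      norm_num
    have e5 : θ * θ ^ (-α) = θ ^ (1 - α) := by
      nth_rewrite 1 [← Real.rpow_one θ]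
      rw [← Real.rpow_add hθ]
      ring_nf
    rw [smul_eq_mul, habs, e1, e2, e3]
    calc θ / (θ + v) ^ 2 * (θ ^ (-α) * (θ + v) ^ α * (v ^ (α - 1) * ((θ + v) ^ (α - 1))⁻¹))
        = (θ * θ ^ (-α)) * ((θ + v) ^ α * ((θ + v) ^ (α - 1))⁻¹) * v ^ (α - 1) / (θ + v) ^ 2 := by
          ring
      _ = θ ^ (1 - α) * (θ + v) * v ^ (α - 1) / (θ + v) ^ 2 := by rw [e4, e5]
      _ = θ ^ (1 - α) * (v ^ (α - 1) * (θ + v)⁻¹) := by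
          field_simp
  rw [hL, hcov, setIntegral_congr_fun measurableSet_Ioo hptwise]
  rw [intervalIntegral.integral_of_le zero_le_one, integral_Ioc_eq_integral_Ioo,
    ← MeasureTheory.integral_const_mul]


private lemma age_analyticAt {α : ℝ} (hα0 : 0 < α) (hα1 : α < 1) {θ₀ : ℝ} (hθ : 0 < θ₀) :
    AnalyticAt ℝ (fun θ : ℝ => θ ^ (1 - α) * ∫ v in (0:ℝ)..1, v ^ (α - 1) * (θ + v)⁻¹) θ₀ := by
  have hne : ∀ x : ℂ, 0 < x.re → x ≠ 0 := fun x hx h => by simp [h] at hx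
  set U : Set ℂ := {z | 0 < z.re} with hU
  have hUopen : IsOpen U := isOpen_lt continuous_const Complex.continuous_re
  set H : ℂ → ℂ := fun z => ∫ v in (0:ℝ)..1, ((v ^ (α - 1) : ℝ) : ℂ) * (z + v)⁻¹ with hH
  have hHdiff : DifferentiableOn ℂ H U := by
    intro z hz
    have hz' : 0 < z.re := hz
    set ε : ℝ := z.re / 2 with hε
    have hε0 : 0 < ε := by positivity
    have hxre : ∀ x ∈ Metric.ball z ε, ε ≤ x.re := by
      intro x hx
      have h1 : |(x - z).re| ≤ ‖x - z‖ := Complex.abs_re_le_norm _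
      rw [Metric.mem_ball, Complex.dist_eq] at hx
      have h2 : |(x - z).re| < ε := lt_of_le_of_lt h1 hx
      rw [abs_lt, Complex.sub_re] at h2
      simp only [hε] at *
      linarith [h2.1]
    have hxt : ∀ x ∈ Metric.ball z ε, ∀ t : ℝ, 0 ≤ t → ε ≤ (x + (t:ℂ)).re := by
      intro x hx t ht
      have := hxre x hx
      rw [Complex.add_re, Complex.ofReal_re]
      linarith
    have hrpowcont : ContinuousOn (fun t : ℝ => ((t ^ (α - 1) : ℝ) : ℂ)) (Set.Ioc (0:ℝ) 1) :=
      Complex.continuous_ofReal.comp_continuousOn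
        (fun t ht => (Real.continuousAt_rpow_const t _ (Or.inl (ne_of_gt ht.1))).continuousWithinAt)
    have hmeasF : ∀ᶠ x : ℂ in nhds z, AEStronglyMeasurable
        (fun t : ℝ => ((t ^ (α - 1) : ℝ) : ℂ) * (x + t)⁻¹)
        (volume.restrict (Set.uIoc (0:ℝ) 1)) := by
      filter_upwards [Metric.ball_mem_nhds z hε0] with x hx
      rw [Set.uIoc_of_le zero_le_one]
      apply ContinuousOn.aestronglyMeasurable _ measurableSet_Ioc
      apply hrpowcont.mul
      apply ContinuousOn.inv₀
      · exact (continuous_const.add Complex.continuous_ofReal).continuousOn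
      · exact fun t ht => hne _ (lt_of_lt_of_le hε0 (hxt x hx t ht.1.le))
    have hmeasF' : AEStronglyMeasurable (fun t : ℝ => -(((t ^ (α - 1) : ℝ) : ℂ) * ((z + t) ^ 2)⁻¹))
        (volume.restrict (Set.uIoc (0:ℝ) 1)) := by
      rw [Set.uIoc_of_le zero_le_one]
      apply ContinuousOn.aestronglyMeasurable _ measurableSet_Ioc
      apply ContinuousOn.neg
      apply hrpowcont.mul
      apply ContinuousOn.inv₀
      · exact ((continuous_const.add Complex.continuous_ofReal).pow 2).continuousOn
      · intro t ht
        exact pow_ne_zero 2 (hne _ (lt_of_lt_of_le hε0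
          (hxt z (Metric.mem_ball_self hε0) t ht.1.le)))
    have hIrpow : IntervalIntegrable (fun t : ℝ => t ^ (α - 1)) volume 0 1 :=
      intervalIntegral.intervalIntegrable_rpow' (by linarith)
    have hIrpowC : IntervalIntegrable (fun t : ℝ => ((t ^ (α - 1) : ℝ) : ℂ)) volume 0 1 := by
      rw [intervalIntegrable_iff_integrableOn_Ioc_of_le zero_le_one] at hIrpow ⊢
      exact hIrpow.ofReal
    have hFzint : IntervalIntegrable (fun t : ℝ => ((t ^ (α - 1) : ℝ) : ℂ) * (z + t)⁻¹) volume 0 1 := by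
      apply hIrpowC.mul_continuousOn
      apply ContinuousOn.inv₀
      · exact (continuous_const.add Complex.continuous_ofReal).continuousOn
      · intro t ht
        rw [Set.uIcc_of_le zero_le_one] at ht
        apply hne
        rw [Complex.add_re, Complex.ofReal_re]
        linarith [ht.1]
    have hboundint : IntervalIntegrable (fun t : ℝ => t ^ (α - 1) * (ε ^ 2)⁻¹) volume 0 1 :=
      hIrpow.mul_const _
    have hbound : ∀ᵐ t : ℝ ∂volume, t ∈ Set.uIoc (0:ℝ) 1 →
        ∀ x ∈ Metric.ball z ε, ‖-(((t ^ (α - 1) : ℝ) : ℂ) * ((x + t) ^ 2)⁻¹)‖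
          ≤ t ^ (α - 1) * (ε ^ 2)⁻¹ := by
      refine Filter.Eventually.of_forall fun t ht x hx => ?_
      rw [Set.uIoc_of_le zero_le_one] at ht
      have ht0 : 0 < t := ht.1
      have hle : ε ≤ ‖x + (t:ℂ)‖ := le_trans (hxt x hx t ht0.le)
        (le_trans (Complex.re_le_norm _) le_rfl)
      rw [norm_neg, norm_mul, norm_inv, norm_pow, Complex.norm_real, Real.norm_eq_abs,
        abs_of_nonneg (Real.rpow_nonneg ht0.le _)]
      apply mul_le_mul_of_nonneg_left _ (Real.rpow_nonneg ht0.le _)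
      apply inv_anti₀ (by positivity)
      exact pow_le_pow_left₀ hε0.le hle 2
    have hders : ∀ᵐ t : ℝ ∂volume, t ∈ Set.uIoc (0:ℝ) 1 →
        ∀ x ∈ Metric.ball z ε, HasDerivAt (fun y : ℂ => ((t ^ (α - 1) : ℝ) : ℂ) * (y + t)⁻¹)
          (-(((t ^ (α - 1) : ℝ) : ℂ) * ((x + t) ^ 2)⁻¹)) x := by
      refine Filter.Eventually.of_forall fun t ht x hx => ?_
      rw [Set.uIoc_of_le zero_le_one] at ht
      have hne' : x + (t:ℂ) ≠ 0 := hne _ (lt_of_lt_of_le hε0 (hxt x hx t ht.1.le))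
      have h1 : HasDerivAt (fun y : ℂ => y + (t:ℂ)) 1 x := (hasDerivAt_id x).add_const _
      have h2 := h1.inv hne'
      have h3 := h2.const_mul ((t ^ (α - 1) : ℝ) : ℂ)
      have hv : -(((t ^ (α - 1) : ℝ) : ℂ) * ((x + t) ^ 2)⁻¹)
          = ((t ^ (α - 1) : ℝ) : ℂ) * (-1 / (x + (t:ℂ)) ^ 2) := by ring
      rw [hv]
      exact h3
    have := intervalIntegral.hasDerivAt_integral_of_dominated_loc_of_deriv_le
      (F := fun (x : ℂ) (t : ℝ) => ((t ^ (α - 1) : ℝ) : ℂ) * (x + t)⁻¹)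
      (F' := fun (x : ℂ) (t : ℝ) => -(((t ^ (α - 1) : ℝ) : ℂ) * ((x + t) ^ 2)⁻¹))
      (bound := fun t : ℝ => t ^ (α - 1) * (ε ^ 2)⁻¹)
      (Metric.ball_mem_nhds z hε0) hmeasF hFzint hmeasF' hbound hboundint hders
    exact this.2.differentiableAt.differentiableWithinAt
  have hθU : ((θ₀ : ℂ)) ∈ U := by simpa [hU] using hθ
  have hHana : AnalyticAt ℂ H (θ₀ : ℂ) := hHdiff.analyticAt (hUopen.mem_nhds hθU)
  have hid : ∀ θ : ℝ, (H (θ:ℂ)).re = ∫ v in (0:ℝ)..1, v ^ (α - 1) * (θ + v)⁻¹ := by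
    intro θ
    have hH2 : H (θ:ℂ) = ((∫ v in (0:ℝ)..1, v ^ (α - 1) * (θ + v)⁻¹ : ℝ) : ℂ) := by
      rw [hH, ← intervalIntegral.integral_ofReal]
      apply intervalIntegral.integral_congr
      intro t _
      push_cast
      ring
    rw [hH2, Complex.ofReal_re]
  have h1 : AnalyticAt ℝ (fun θ : ℝ => ∫ v in (0:ℝ)..1, v ^ (α - 1) * (θ + v)⁻¹) θ₀ := by
    have hres : AnalyticAt ℝ H ((Complex.ofRealCLM : ℝ →L[ℝ] ℂ) θ₀) := hHana.restrictScalars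
    have hcomp := (((Complex.reCLM : ℂ →L[ℝ] ℝ).analyticAt
        (H ((Complex.ofRealCLM : ℝ →L[ℝ] ℂ) θ₀))).comp hres).comp
      ((Complex.ofRealCLM : ℝ →L[ℝ] ℂ).analyticAt θ₀)
    apply hcomp.congr
    exact Filter.Eventually.of_forall fun θ => by simpa [Function.comp] using hid θ
  exact ((Real.contDiffAt_rpow_const_of_ne hθ.ne').analyticAt).mul h1


/-- The ageing function
`f(θ) = (sin(πα)/π) ∫_{θ/(1+θ)}^1 u^{-α}(1-u)^{α-1} du` satisfies `f 0 = 1`, is infinitely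
differentiable on `(0, ∞)` with `f'(θ) = -(sin(πα)/π) θ^{-α} (1+θ)⁻¹` there, and is
completely monotone: `(-1)^n f^{(n)}(θ) ≥ 0` for every `n ≥ 0` and `θ > 0`. -/
theorem rem_trap_ageing_function_completely_monotone
    (α : ℝ) (hα0 : 0 < α) (hα1 : α < 1)
    (f : ℝ → ℝ)
    (hf : ∀ θ : ℝ, f θ = (Real.sin (Real.pi * α) / Real.pi) *
      ∫ u in (θ / (1 + θ))..1, u ^ (-α) * (1 - u) ^ (α - 1)) :
    f 0 = 1 ∧
    ContDiffOn ℝ (⊤ : ℕ∞) f (Set.Ioi 0) ∧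
    (∀ θ : ℝ, 0 < θ →
      deriv f θ = -(Real.sin (Real.pi * α) / Real.pi) * θ ^ (-α) * (1 + θ)⁻¹) ∧
    (∀ n : ℕ, ∀ θ : ℝ, 0 < θ → 0 ≤ (-1 : ℝ) ^ n * iteratedDeriv n f θ) := by
  set c : ℝ := Real.sin (Real.pi * α) / Real.pi with hc
  have hπ : 0 < Real.pi := Real.pi_pos
  have hsin : 0 < Real.sin (Real.pi * α) :=
    Real.sin_pos_of_pos_of_lt_pi (by positivity) (by nlinarith)
  have hc0 : 0 < c := div_pos hsin hπ
  -- value at 0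
  have hf0 : f 0 = 1 := by
    have h := hf 0
    norm_num at h
    rw [h, age_beta hα0 hα1, hc]
    field_simp
  -- derivative
  have hderiv : ∀ θ : ℝ, 0 < θ → HasDerivAt f (-(c * (θ ^ (-α) * (1 + θ)⁻¹))) θ := by
    intro θ hθ
    have hfe : f = fun t : ℝ => c * ∫ u in (t / (1 + t))..1, u ^ (-α) * (1 - u) ^ (α - 1) :=
      funext hf
    rw [hfe]
    have h2 : HasDerivAt _ _ θ := (age_hasDerivAt hα0 hα1 hθ).const_mul c
    refine h2.congr_deriv ?_
    ring
  have hderiv' : ∀ θ : ℝ, 0 < θ → deriv f θ = -c * θ ^ (-α) * (1 + θ)⁻¹ := by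
    intro θ hθ
    rw [(hderiv θ hθ).deriv]; ring
  -- nonnegativity of f
  have hfnn : ∀ θ : ℝ, 0 < θ → 0 ≤ f θ := by
    intro θ hθ
    have h1θ : (0:ℝ) < 1 + θ := by linarith
    have hs1 : θ / (1 + θ) ≤ 1 := le_of_lt ((div_lt_one h1θ).2 (by linarith))
    rw [hf θ]
    apply mul_nonneg hc0.le
    apply intervalIntegral.integral_nonneg hs1
    intro u hu
    have hu0 : 0 ≤ u := le_trans (by positivity) hu.1
    have hu1 : 0 ≤ 1 - u := by linarith [hu.2]
    exact mul_nonneg (Real.rpow_nonneg hu0 _) (Real.rpow_nonneg hu1 _)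
  -- analyticity
  have hana : ContDiffOn ℝ (⊤ : ℕ∞) f (Set.Ioi 0) := by
    refine ContDiffOn.of_le ?_ le_top
    rw [contDiffOn_omega_iff_analyticOn isOpen_Ioi.uniqueDiffOn]
    intro θ₀ hθ₀
    have hθ0 : (0:ℝ) < θ₀ := hθ₀
    have h1 := (analyticAt_const (v := c)).mul (age_analyticAt hα0 hα1 hθ0)
    apply AnalyticAt.analyticWithinAt
    apply h1.congr
    refine Filter.eventuallyEq_of_mem (isOpen_Ioi.mem_nhds hθ₀) fun θ hθ => ?_
    rw [hf θ, age_cov hα0 hα1 hθ]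
    rfl
  -- iterated derivatives via the cone
  have hstep : ∀ g : {g : ℝ → ℝ // AgeCone α g}, ∃ g' : {g : ℝ → ℝ // AgeCone α g},
      ∀ θ : ℝ, 0 < θ → HasDerivAt g.1 (-g'.1 θ) θ := by
    rintro ⟨g, hg⟩
    obtain ⟨g', hg', hd⟩ := ageCone_deriv hα0 hg
    exact ⟨⟨g', hg'⟩, hd⟩
  let G : ℕ → {g : ℝ → ℝ // AgeCone α g} :=
    fun n => Nat.rec ⟨_, AgeCone.base (α := α) 0 0⟩ (fun _ g => (hstep g).choose) n
  have hG : ∀ n, ∀ θ : ℝ, 0 < θ → HasDerivAt (G n).1 (-(G (n+1)).1 θ) θ :=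
    fun n => (hstep (G n)).choose_spec
  have hG0 : ∀ θ : ℝ, 0 < θ → (G 0).1 θ = θ ^ (-α) * (1 + θ)⁻¹ := by
    intro θ hθ
    show θ ^ (-α - ((0:ℕ):ℝ)) * (1 + θ) ^ (-1 - ((0:ℕ):ℝ)) = _
    norm_num [Real.rpow_neg_one]
  have hiter : ∀ n, ∀ θ : ℝ, 0 < θ →
      iteratedDeriv (n+1) f θ = (-1:ℝ)^(n+1) * (c * (G n).1 θ) := by
    intro n
    induction n with
    | zero =>
      intro θ hθ
      rw [iteratedDeriv_one, (hderiv θ hθ).deriv, hG0 θ hθ]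
      ring
    | succ n ih =>
      intro θ hθ
      rw [iteratedDeriv_succ]
      have heq : iteratedDeriv (n+1) f =ᶠ[nhds θ] fun x => (-1:ℝ)^(n+1) * (c * (G n).1 x) :=
        Filter.eventuallyEq_of_mem (isOpen_Ioi.mem_nhds hθ) fun x hx => ih x hx
      rw [heq.deriv_eq]
      have hdx : HasDerivAt (fun x => (-1:ℝ)^(n+1) * (c * (G n).1 x))
          ((-1:ℝ)^(n+1) * (c * (-(G (n+1)).1 θ))) θ := ((hG n θ hθ).const_mul c).const_mul _
      rw [hdx.deriv, pow_succ]
      ring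
  refine ⟨hf0, hana, fun θ hθ => hderiv' θ hθ, ?_⟩
  intro n θ hθ
  cases n with
  | zero => simpa using hfnn θ hθ
  | succ n =>
    rw [hiter n θ hθ, ← mul_assoc, ← pow_add]
    have hev : Even (n + 1 + (n + 1)) := ⟨n + 1, by ring⟩
    rw [hev.neg_one_pow, one_mul]
    exact mul_nonneg hc0.le (ageCone_nonneg (G n).2 θ hθ)
end

section
/- Let (x_k)_{k≥1} be a strictly increasing sequence of positive reals with Σ_{k=1}^∞ 1/x_k < ∞, and define ψ_N(λ) := Σ_{k=1}^N 1/(x_k − λ) and ψ_∞(λ) := Σ_{k=1}^∞ 1/(x_k − λ) for λ ∉ {x_k : k ≥ 1}. Then for every i ≥ 2: ψ_∞ has a unique zero λ_i in the open interval (x_{i−1}, x_i); for every N ≥ i, ψ_N has a unique zero λ_i^{(N)} in (x_{i−1}, x_i); and these converge, λ_i^{(N)} → λ_i as N → ∞, with the quantitative bound |λ_i^{(N)} − λ_i| ≤ (x_i − x_{i−1})² · Σ_{k=N+1}^∞ 1/(x_k − x_i). -/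
set_option maxHeartbeats 8000000

open Filter

private lemma one_div_lt_one_div_aux {u v : ℝ} (h : v < u) (huv : 0 < u * v) :
    1 / u < 1 / v := by
  have hu : u ≠ 0 := by rintro rfl; simp at huv
  have hv : v ≠ 0 := by rintro rfl; simp at huv
  have h1 : 1 / u * (u * v) = v := by
    field_simp
  have h2 : 1 / v * (u * v) = u := by
    field_simp
  refine lt_of_mul_lt_mul_right ?_ huv.le
  rw [h1, h2]
  exact h

/-- Let `(x k)` be a strictly increasing sequence of positive reals with
`∑ 1/x k < ∞`, and let `ψ_N(λ) = ∑_{k<N} 1/(x k - λ)` and `ψ_∞(λ) = ∑_k 1/(x k - λ)`.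
Then for every `i ≥ 1`: `ψ_∞` has a unique zero `lam` in `(x (i-1), x i)`; for every `N > i`,
`ψ_N` has a unique zero `lamN N` in `(x (i-1), x i)`; `lamN N → lam` as `N → ∞`, with the
quantitative bound `|lamN N - lam| ≤ (x i - x (i-1))² ∑_{k ≥ N} 1/(x k - x i)`. -/
theorem trap_model_infinite_volume_eigenvalue_convergence
    (x : ℕ → ℝ) (hx_pos : ∀ k, 0 < x k) (hx_mono : StrictMono x)
    (hx_sum : Summable fun k => 1 / x k) :
    ∀ i : ℕ, 1 ≤ i →
      ∃ lam : ℝ, ∃ lamN : ℕ → ℝ,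
        (lam ∈ Set.Ioo (x (i - 1)) (x i) ∧ (∑' k : ℕ, 1 / (x k - lam)) = 0 ∧
          ∀ μ ∈ Set.Ioo (x (i - 1)) (x i), (∑' k : ℕ, 1 / (x k - μ)) = 0 → μ = lam) ∧
        (∀ N : ℕ, i < N →
          lamN N ∈ Set.Ioo (x (i - 1)) (x i) ∧
          (∑ k ∈ Finset.range N, 1 / (x k - lamN N)) = 0 ∧
          ∀ μ ∈ Set.Ioo (x (i - 1)) (x i),
            (∑ k ∈ Finset.range N, 1 / (x k - μ)) = 0 → μ = lamN N) ∧
        Tendsto lamN atTop (nhds lam) ∧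
        (∀ N : ℕ, i < N →
          |lamN N - lam| ≤
            (x i - x (i - 1)) ^ 2 * ∑' m : ℕ, 1 / (x (N + m) - x i)) := by
  intro i hi
  have hib : i - 1 < i := Nat.sub_lt hi one_pos
  set a := x (i - 1) with ha
  set b := x i with hb
  have hab : a < b := hx_mono hib
  have hk_lo : ∀ k, k < i → x k ≤ a := fun k hk =>
    hx_mono.monotone (Nat.le_sub_one_of_lt hk)
  have hk_hi : ∀ k, i ≤ k → b ≤ x k := fun k hk => hx_mono.monotone hk
  -- `x` tends to infinity
  have hxinf : Tendsto x atTop atTop := by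
    have h0 : Tendsto (fun k => 1 / x k) atTop (nhdsWithin 0 (Set.Ioi 0)) :=
      tendsto_nhdsWithin_of_tendsto_nhds_of_eventually_within _ hx_sum.tendsto_atTop_zero
        (Eventually.of_forall fun k => by
          have := hx_pos k; exact Set.mem_Ioi.mpr (by positivity))
    have h1 := h0.inv_tendsto_nhdsGT_zero
    have h2 : ∀ k, (fun k => 1 / x k)⁻¹ k = x k := by
      intro k; simp [Pi.inv_apply, one_div]
    exact h1.congr h2
  -- summability of the shifted series
  have hsum : ∀ c : ℝ, Summable fun k => 1 / (x k - c) := by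
    intro c
    obtain ⟨K, hK⟩ := eventually_atTop.mp (hxinf.eventually_ge_atTop (2 * c + 2))
    rw [← summable_nat_add_iff K]
    have hsum2 : Summable fun n => 2 * (1 / x (n + K)) :=
      ((summable_nat_add_iff K).mpr hx_sum).mul_left 2
    refine Summable.of_nonneg_of_le (fun n => ?_) (fun n => ?_) hsum2
    · have h1 : 2 * c + 2 ≤ x (n + K) := hK _ (Nat.le_add_left K n)
      have hx0 := hx_pos (n + K)
      have h2 : 0 < x (n + K) - c := by linarith
      positivity
    · have h1 : 2 * c + 2 ≤ x (n + K) := hK _ (Nat.le_add_left K n)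
      have hx0 := hx_pos (n + K)
      have h2 : 0 < x (n + K) - c := by linarith
      have h3 : (2 : ℝ) * (1 / x (n + K)) = 2 / x (n + K) := by ring
      rw [h3, div_le_div_iff₀ h2 hx0]
      linarith
  -- strict monotonicity of each term on the interval
  have hterm : ∀ μ ∈ Set.Ioo a b, ∀ μ' ∈ Set.Ioo a b, μ < μ' → ∀ k,
      1 / (x k - μ) < 1 / (x k - μ') := by
    intro μ hμ μ' hμ' hlt k
    refine one_div_lt_one_div_aux (by linarith) ?_
    rcases lt_or_ge k i with hk | hk
    · have h1 := hk_lo k hk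
      have h2 : x k - μ < 0 := by linarith [hμ.1]
      have h3 : x k - μ' < 0 := by linarith [hμ'.1]
      nlinarith
    · have h1 := hk_hi k hk
      have h2 : 0 < x k - μ := by linarith [hμ.2]
      have h3 : 0 < x k - μ' := by linarith [hμ'.2]
      nlinarith
  have hne : ∀ k, ∀ μ ∈ Set.Ioo a b, x k - μ ≠ 0 := by
    intro k μ hμ h
    rcases lt_or_ge k i with hk | hk
    · have h1 := hk_lo k hk; have h2 := hμ.1; linarith
    · have h1 := hk_hi k hk; have h2 := hμ.2; linarith
  -- strict monotonicity of ψ_∞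
  have hpsi_mono : ∀ μ ∈ Set.Ioo a b, ∀ μ' ∈ Set.Ioo a b, μ < μ' →
      (∑' k, 1 / (x k - μ)) < ∑' k, 1 / (x k - μ') := by
    intro μ hμ μ' hμ' hlt
    exact Summable.tsum_lt_tsum (fun k => (hterm μ hμ μ' hμ' hlt k).le)
      (hterm μ hμ μ' hμ' hlt 0) (hsum μ) (hsum μ')
  -- strict monotonicity of ψ_N
  have hpsiN_mono : ∀ N : ℕ, 0 < N → ∀ μ ∈ Set.Ioo a b, ∀ μ' ∈ Set.Ioo a b, μ < μ' →
      (∑ k ∈ Finset.range N, 1 / (x k - μ)) < ∑ k ∈ Finset.range N, 1 / (x k - μ') := by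
    intro N hN μ hμ μ' hμ' hlt
    exact Finset.sum_lt_sum_of_nonempty (Finset.nonempty_range_iff.mpr hN.ne')
      (fun k _ => hterm μ hμ μ' hμ' hlt k)
  -- continuity of each term
  have hcont_term : ∀ (p q : ℝ), a < p → q < b → ∀ k,
      ContinuousOn (fun μ => 1 / (x k - μ)) (Set.Icc p q) := by
    intro p q hp hq k
    refine ContinuousOn.div continuousOn_const
      ((continuous_const.sub continuous_id).continuousOn) ?_
    intro μ hμ
    exact hne k μ ⟨lt_of_lt_of_le hp hμ.1, lt_of_le_of_lt hμ.2 hq⟩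
  -- continuity of ψ_∞ on compact subintervals
  have hcont_inf : ∀ (p q : ℝ), a < p → q < b →
      ContinuousOn (fun μ => ∑' k, 1 / (x k - μ)) (Set.Icc p q) := by
    intro p q hp hq
    have hu : Summable (fun k => if k < i then 1 / (p - a) else 1 / (x k - q)) := by
      rw [← summable_nat_add_iff i]
      refine ((summable_nat_add_iff i).mpr (hsum q)).congr fun n => ?_
      simp [Nat.not_lt.mpr (Nat.le_add_left i n)]
    refine continuousOn_tsum (fun k => hcont_term p q hp hq k) hu ?_
    intro k μ hμ
    rcases lt_or_ge k i with hk | hk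
    · have h1 := hk_lo k hk
      have h2 : p - a ≤ μ - x k := by linarith [hμ.1]
      have h3 : 0 < p - a := by linarith
      rw [if_pos hk, Real.norm_eq_abs, abs_div, abs_one, abs_sub_comm,
        abs_of_pos (show (0:ℝ) < μ - x k by linarith)]
      exact one_div_le_one_div_of_le h3 h2
    · have h1 := hk_hi k hk
      have h2 : x k - q ≤ x k - μ := by linarith [hμ.2]
      have h3 : 0 < x k - q := by linarith
      rw [if_neg (Nat.not_lt.mpr hk), Real.norm_eq_abs, abs_div, abs_one,
        abs_of_pos (show (0:ℝ) < x k - μ by linarith)]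
      exact one_div_le_one_div_of_le h3 h2
  -- boundary constants
  set c1 := a + (b - a) / 3 with hc1
  set c2 := a + 2 * (b - a) / 3 with hc2
  have hac1 : a < c1 := by rw [hc1]; linarith
  have hc1c2 : c1 < c2 := by rw [hc1, hc2]; linarith
  have hc2b : c2 < b := by rw [hc2]; linarith
  have hSM : Summable fun m => 1 / (x (m + i) - c1) := (summable_nat_add_iff i).mpr (hsum c1)
  set M := ∑' m, 1 / (x (m + i) - c1) with hM
  have hM0 : 0 ≤ M := by
    rw [hM]
    refine tsum_nonneg fun m => ?_
    have h1 := hk_hi (m + i) (Nat.le_add_left i m)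
    have h2 : 0 < x (m + i) - c1 := by linarith
    positivity
  set M' := ∑ k ∈ Finset.range i, 1 / (c2 - x k) with hM'
  have hM'0 : 0 ≤ M' := Finset.sum_nonneg fun k hk => by
    have h1 := hk_lo k (Finset.mem_range.mp hk)
    have h2 : 0 < c2 - x k := by linarith
    positivity
  -- upper bound for the head part
  have head_ub : ∀ μ, a < μ → (∑ k ∈ Finset.range i, 1 / (x k - μ)) ≤ 1 / (a - μ) := by
    intro μ hμ
    have hstep : (∑ k ∈ Finset.range i, 1 / (x k - μ)) =
        (∑ k ∈ Finset.range (i - 1), 1 / (x k - μ)) + 1 / (x (i - 1) - μ) := by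
      conv_lhs => rw [show i = (i - 1) + 1 from (Nat.succ_pred_eq_of_pos hi).symm]
      rw [Finset.sum_range_succ]
    rw [hstep, ← ha]
    have h1 : (∑ k ∈ Finset.range (i - 1), 1 / (x k - μ)) ≤ 0 := by
      refine Finset.sum_nonpos fun k hk => ?_
      have hk' : k < i := lt_of_lt_of_le (Finset.mem_range.mp hk) (Nat.sub_le i 1)
      have h2 := hk_lo k hk'
      exact le_of_lt (div_neg_of_pos_of_neg one_pos (by linarith))
    linarith
  -- middle sums bounded by M
  have mid_ub_fin : ∀ N : ℕ, ∀ μ, μ ≤ c1 →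
      (∑ k ∈ Finset.Ico i N, 1 / (x k - μ)) ≤ M := by
    intro N μ hμ
    have step1 : (∑ k ∈ Finset.Ico i N, 1 / (x k - μ)) ≤
        ∑ k ∈ Finset.Ico i N, 1 / (x k - c1) := by
      refine Finset.sum_le_sum fun k hk => ?_
      have h1 := hk_hi k (Finset.mem_Ico.mp hk).1
      have h2 : 0 < x k - c1 := by linarith
      exact one_div_le_one_div_of_le h2 (by linarith)
    have step2 : (∑ k ∈ Finset.Ico i N, 1 / (x k - c1)) ≤ M := by
      rw [Finset.sum_Ico_eq_sum_range]
      have heq : ∀ m ∈ Finset.range (N - i), (1:ℝ) / (x (i + m) - c1) = 1 / (x (m + i) - c1) :=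
        fun m _ => by rw [add_comm]
      rw [Finset.sum_congr rfl heq, hM]
      refine Summable.sum_le_tsum (Finset.range (N - i)) (fun m _ => ?_) hSM
      have h1 := hk_hi (m + i) (Nat.le_add_left i m)
      have h2 : 0 < x (m + i) - c1 := by linarith
      positivity
    linarith
  have mid_ub_inf : ∀ μ, μ ≤ c1 → (∑' m, 1 / (x (m + i) - μ)) ≤ M := by
    intro μ hμ
    rw [hM]
    refine Summable.tsum_le_tsum (fun m => ?_) ((summable_nat_add_iff i).mpr (hsum μ)) hSM
    have h1 := hk_hi (m + i) (Nat.le_add_left i m)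
    have h2 : 0 < x (m + i) - c1 := by linarith
    exact one_div_le_one_div_of_le h2 (by linarith)
  -- full upper bounds near the left endpoint
  have UB_inf : ∀ μ, a < μ → μ ≤ c1 → (∑' k, 1 / (x k - μ)) ≤ 1 / (a - μ) + M := by
    intro μ hμ1 hμ2
    rw [← Summable.sum_add_tsum_nat_add i (hsum μ)]
    have h1 := head_ub μ hμ1
    have h2 := mid_ub_inf μ hμ2
    linarith
  have UB_fin : ∀ N : ℕ, i ≤ N → ∀ μ, a < μ → μ ≤ c1 →
      (∑ k ∈ Finset.range N, 1 / (x k - μ)) ≤ 1 / (a - μ) + M := by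
    intro N hNi μ hμ1 hμ2
    have hsplit : (∑ k ∈ Finset.range i, 1 / (x k - μ)) +
        (∑ k ∈ Finset.Ico i N, 1 / (x k - μ)) = ∑ k ∈ Finset.range N, 1 / (x k - μ) := by
      rw [Finset.range_eq_Ico, Finset.range_eq_Ico]
      exact Finset.sum_Ico_consecutive _ (Nat.zero_le i) hNi
    have h1 := head_ub μ hμ1
    have h2 := mid_ub_fin N μ hμ2
    linarith
  -- lower bound for the head part
  have head_lb : ∀ μ, μ < b → c2 ≤ μ →
      1 / (b - μ) - M' ≤ ∑ k ∈ Finset.range (i + 1), 1 / (x k - μ) := by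
    intro μ hμ1 hμ2
    rw [Finset.sum_range_succ]
    have h1 : -M' ≤ ∑ k ∈ Finset.range i, 1 / (x k - μ) := by
      rw [hM', ← Finset.sum_neg_distrib]
      refine Finset.sum_le_sum fun k hk => ?_
      have h2 := hk_lo k (Finset.mem_range.mp hk)
      have h3 : 0 < c2 - x k := by linarith
      have h6 := one_div_le_one_div_of_le h3 (by linarith : c2 - x k ≤ μ - x k)
      have h5 : (1:ℝ) / (x k - μ) = -(1 / (μ - x k)) := by
        rw [show x k - μ = -(μ - x k) by ring, div_neg]
      linarith
    have h7 : (1:ℝ) / (x i - μ) = 1 / (b - μ) := by rw [hb]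
    linarith
  -- full lower bounds near the right endpoint
  have LB_inf : ∀ μ, μ < b → c2 ≤ μ →
      1 / (b - μ) - M' ≤ ∑' k, 1 / (x k - μ) := by
    intro μ hμ1 hμ2
    rw [← Summable.sum_add_tsum_nat_add (i + 1) (hsum μ)]
    have h1 := head_lb μ hμ1 hμ2
    have h2 : 0 ≤ ∑' m, 1 / (x (m + (i + 1)) - μ) := by
      refine tsum_nonneg fun m => ?_
      have h3 : b ≤ x (m + (i + 1)) := hk_hi _ (by omega)
      have h4 : 0 < x (m + (i + 1)) - μ := by linarith
      positivity
    linarith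
  have LB_fin : ∀ N, i < N → ∀ μ, μ < b → c2 ≤ μ →
      1 / (b - μ) - M' ≤ ∑ k ∈ Finset.range N, 1 / (x k - μ) := by
    intro N hN μ hμ1 hμ2
    have hsplit : (∑ k ∈ Finset.range (i + 1), 1 / (x k - μ)) +
        (∑ k ∈ Finset.Ico (i + 1) N, 1 / (x k - μ)) = ∑ k ∈ Finset.range N, 1 / (x k - μ) := by
      rw [Finset.range_eq_Ico, Finset.range_eq_Ico]
      exact Finset.sum_Ico_consecutive _ (Nat.zero_le (i + 1)) (by omega)
    have h1 := head_lb μ hμ1 hμ2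
    have h2 : 0 ≤ ∑ k ∈ Finset.Ico (i + 1) N, 1 / (x k - μ) := by
      refine Finset.sum_nonneg fun k hk => ?_
      have hk' := (Finset.mem_Ico.mp hk).1
      have h3 : b ≤ x k := hk_hi k (by omega)
      have h4 : 0 < x k - μ := by linarith
      positivity
    linarith
  -- endpoints for the intermediate value theorem
  have hM1 : (0:ℝ) < M + 1 := by linarith
  have hM'1 : (0:ℝ) < M' + 1 := by linarith
  set a' := min (a + 1 / (M + 1)) c1 with ha'
  set b' := max (b - 1 / (M' + 1)) c2 with hb'
  have haa' : a < a' := lt_min (by linarith [one_div_pos.mpr hM1]) hac1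
  have ha'c1 : a' ≤ c1 := min_le_right _ _
  have hc2b' : c2 ≤ b' := le_max_right _ _
  have hb'b : b' < b := max_lt (by linarith [one_div_pos.mpr hM'1]) hc2b
  have ha'b' : a' < b' := lt_of_le_of_lt ha'c1 (lt_of_lt_of_le hc1c2 hc2b')
  have hend_left : 1 / (a - a') + M ≤ -1 := by
    have h1 : 0 < a' - a := by linarith
    have h2 : a' - a ≤ 1 / (M + 1) := by
      have h := min_le_left (a + 1 / (M + 1)) c1
      rw [← ha'] at h
      linarith
    have h3 : M + 1 ≤ 1 / (a' - a) := by
      rw [le_div_iff₀ h1]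
      calc (M + 1) * (a' - a) ≤ (M + 1) * (1 / (M + 1)) := by nlinarith
        _ = 1 := by field_simp
    have h4 : 1 / (a - a') = -(1 / (a' - a)) := by
      rw [show a - a' = -(a' - a) by ring, div_neg]
    linarith
  have hend_right : 1 ≤ 1 / (b - b') - M' := by
    have h1 : 0 < b - b' := by linarith
    have h2 : b - b' ≤ 1 / (M' + 1) := by
      have h := le_max_left (b - 1 / (M' + 1)) c2
      rw [← hb'] at h
      linarith
    have h3 : M' + 1 ≤ 1 / (b - b') := by
      rw [le_div_iff₀ h1]
      calc (M' + 1) * (b - b') ≤ (M' + 1) * (1 / (M' + 1)) := by nlinarith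
        _ = 1 := by field_simp
    linarith
  -- existence of the zero of ψ_∞
  have hψa' : (∑' k, 1 / (x k - a')) < 0 := by
    have h := UB_inf a' haa' ha'c1
    linarith
  have hψb' : 0 < ∑' k, 1 / (x k - b') := by
    have h := LB_inf b' hb'b hc2b'
    linarith
  obtain ⟨lam, hlam_mem, hlam0⟩ :
      ∃ lam ∈ Set.Icc a' b', (∑' k, 1 / (x k - lam)) = 0 := by
    have hIcc := intermediate_value_Icc ha'b'.le (hcont_inf a' b' haa' hb'b)
    obtain ⟨lam, h1, h2⟩ := hIcc ⟨hψa'.le, hψb'.le⟩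
    exact ⟨lam, h1, h2⟩
  have hlam_Ioo : lam ∈ Set.Ioo a b :=
    ⟨lt_of_lt_of_le haa' hlam_mem.1, lt_of_le_of_lt hlam_mem.2 hb'b⟩
  -- existence of the zeros of ψ_N
  have hexN : ∀ N, i < N →
      ∃ l, l ∈ Set.Ioo a b ∧ (∑ k ∈ Finset.range N, 1 / (x k - l)) = 0 := by
    intro N hN
    have hcontN : ContinuousOn (fun μ => ∑ k ∈ Finset.range N, 1 / (x k - μ))
        (Set.Icc a' b') :=
      continuousOn_finset_sum _ fun k _ => hcont_term a' b' haa' hb'b k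
    have hNa' : (∑ k ∈ Finset.range N, 1 / (x k - a')) < 0 := by
      have h := UB_fin N hN.le a' haa' ha'c1
      linarith
    have hNb' : 0 < ∑ k ∈ Finset.range N, 1 / (x k - b') := by
      have h := LB_fin N hN b' hb'b hc2b'
      linarith
    have hIcc := intermediate_value_Icc ha'b'.le hcontN
    obtain ⟨l, h1, h2⟩ := hIcc ⟨hNa'.le, hNb'.le⟩
    exact ⟨l, ⟨lt_of_lt_of_le haa' h1.1, lt_of_le_of_lt h1.2 hb'b⟩, h2⟩
  set lamN : ℕ → ℝ := fun N => if h : i < N then (hexN N h).choose else lam with hlamN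
  have hlamN_spec : ∀ N, ∀ h : i < N, lamN N ∈ Set.Ioo a b ∧
      (∑ k ∈ Finset.range N, 1 / (x k - lamN N)) = 0 := by
    intro N h
    have hspec := (hexN N h).choose_spec
    simpa only [hlamN, dif_pos h] using hspec
  -- the quantitative bound
  have hbound : ∀ N, i < N →
      |lamN N - lam| ≤ (b - a) ^ 2 * ∑' m, 1 / (x (N + m) - b) := by
    intro N hN
    obtain ⟨hl_mem, hl0⟩ := hlamN_spec N hN
    set l := lamN N with hl
    have hTpos : ∀ m, 0 < x (N + m) - b := fun m => by
      have h := hx_mono (lt_of_lt_of_le hN (Nat.le_add_right N m))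
      rw [← hb] at h
      linarith
    have hsumT : Summable fun m => 1 / (x (N + m) - b) :=
      ((summable_nat_add_iff N).mpr (hsum b)).congr fun m => by rw [add_comm]
    have hT0 : 0 ≤ ∑' m, 1 / (x (N + m) - b) :=
      tsum_nonneg fun m => (one_div_pos.mpr (hTpos m)).le
    have hle : lam ≤ l := by
      by_contra hcon
      push_neg at hcon
      have h1 : (∑' k, 1 / (x k - l)) < 0 := by
        have h := hpsi_mono l hl_mem lam hlam_Ioo hcon
        rwa [hlam0] at h
      have h2 : 0 ≤ ∑' k, 1 / (x k - l) := by
        rw [← Summable.sum_add_tsum_nat_add N (hsum l), hl0, zero_add]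
        refine tsum_nonneg fun m => ?_
        have hm : b ≤ x (m + N) := hk_hi _ (by omega)
        exact (one_div_pos.mpr (by linarith [hl_mem.2])).le
      linarith
    have hA : (∑' k, 1 / (x k - l)) ≤ ∑' m, 1 / (x (N + m) - b) := by
      rw [← Summable.sum_add_tsum_nat_add N (hsum l), hl0, zero_add]
      refine Summable.tsum_le_tsum (fun m => ?_) ((summable_nat_add_iff N).mpr (hsum l)) hsumT
      have h1 := hTpos m
      have h2 : x (N + m) - b ≤ x (m + N) - l := by
        rw [add_comm m N]; linarith [hl_mem.2]
      exact one_div_le_one_div_of_le h1 h2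
    have hB : (l - lam) / (b - a) ^ 2 ≤ ∑' k, 1 / (x k - l) := by
      have hdiff : (∑' k, (1 / (x k - l) - 1 / (x k - lam))) = ∑' k, 1 / (x k - l) := by
        rw [Summable.tsum_sub (hsum l) (hsum lam), hlam0, sub_zero]
      rw [← hdiff]
      have hnonneg : ∀ j, 0 ≤ 1 / (x j - l) - 1 / (x j - lam) := by
        intro j
        rcases eq_or_lt_of_le hle with h | h
        · rw [h]; simp
        · linarith [hterm lam hlam_Ioo l hl_mem h j]
      have hp : 0 < l - a := by linarith [hl_mem.1]
      have hq : 0 < lam - a := by linarith [hlam_Ioo.1]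
      have hpb : l - a < b - a := by linarith [hl_mem.2]
      have hqb : lam - a < b - a := by linarith [hlam_Ioo.2]
      have hterm_ge : (l - lam) / (b - a) ^ 2 ≤
          1 / (x (i - 1) - l) - 1 / (x (i - 1) - lam) := by
        rw [← ha]
        have hne1 : a - l ≠ 0 := by intro h; linarith
        have hne2 : a - lam ≠ 0 := by intro h; linarith
        have heq : 1 / (a - l) - 1 / (a - lam) = (l - lam) / ((a - l) * (a - lam)) := by
          rw [div_sub_div _ _ hne1 hne2]
          congr 1
          ring
        rw [heq]
        have hden : 0 < (a - l) * (a - lam) := by nlinarith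
        have hden2 : (a - l) * (a - lam) ≤ (b - a) ^ 2 := by nlinarith
        have hnum : 0 ≤ l - lam := by linarith
        rw [div_le_div_iff₀ (pow_pos (show (0:ℝ) < b - a by linarith) 2) hden]
        nlinarith [mul_le_mul_of_nonneg_left hden2 hnum]
      exact le_trans hterm_ge
        (Summable.le_tsum ((hsum l).sub (hsum lam)) (i - 1) fun j _ => hnonneg j)
    have hkey : l - lam ≤ (b - a) ^ 2 * ∑' m, 1 / (x (N + m) - b) := by
      have h1 : (l - lam) / (b - a) ^ 2 ≤ ∑' m, 1 / (x (N + m) - b) := le_trans hB hA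
      have h2 : (0:ℝ) < (b - a) ^ 2 := pow_pos (show (0:ℝ) < b - a by linarith) 2
      rw [div_le_iff₀ h2] at h1
      calc l - lam ≤ (∑' m, 1 / (x (N + m) - b)) * (b - a) ^ 2 := h1
        _ = (b - a) ^ 2 * ∑' m, 1 / (x (N + m) - b) := mul_comm _ _
    rw [abs_of_nonneg (by linarith : (0:ℝ) ≤ l - lam)]
    exact hkey
  -- convergence
  have hTto : Tendsto (fun N => ∑' m, 1 / (x (N + m) - b)) atTop (nhds 0) := by
    have h := tendsto_sum_nat_add (fun k => 1 / (x k - b))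
    exact h.congr fun N => tsum_congr fun m => by rw [add_comm]
  have htend : Tendsto lamN atTop (nhds lam) := by
    rw [tendsto_iff_norm_sub_tendsto_zero]
    have hg : Tendsto (fun N => (b - a) ^ 2 * ∑' m, 1 / (x (N + m) - b)) atTop (nhds 0) := by
      have h := hTto.const_mul ((b - a) ^ 2)
      simpa using h
    refine squeeze_zero' (Eventually.of_forall fun N => norm_nonneg _) ?_ hg
    filter_upwards [eventually_gt_atTop i] with N hN
    simpa [Real.norm_eq_abs] using hbound N hN
  refine ⟨lam, lamN, ⟨hlam_Ioo, hlam0, ?_⟩, ?_, htend, hbound⟩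
  · intro μ hμ h0
    rcases lt_trichotomy μ lam with h | h | h
    · have hc := hpsi_mono μ hμ lam hlam_Ioo h
      rw [h0, hlam0] at hc
      exact absurd hc (lt_irrefl 0)
    · exact h
    · have hc := hpsi_mono lam hlam_Ioo μ hμ h
      rw [h0, hlam0] at hc
      exact absurd hc (lt_irrefl 0)
  · intro N hN
    obtain ⟨h1, h2⟩ := hlamN_spec N hN
    refine ⟨h1, h2, ?_⟩
    intro μ hμ h0
    rcases lt_trichotomy μ (lamN N) with h | h | h
    · have hc := hpsiN_mono N (by omega) μ hμ (lamN N) h1 h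
      rw [h0, h2] at hc
      exact absurd hc (lt_irrefl 0)
    · exact h
    · have hc := hpsiN_mono N (by omega) (lamN N) h1 μ hμ h
      rw [h2, h0] at hc
      exact absurd hc (lt_irrefl 0)
end

section
/- Let L be an N×N complex matrix and let C be the circle of center c ∈ ℂ and radius r > 0, positively oriented, whose open interior contains all eigenvalues of L. Then for every t ∈ ℝ: exp(−t·L) = (1/(2πi)) ∮_C e^{−tλ}·(λ·I − L)^{−1} dλ, where the integral is taken entrywise and (λ·I − L)^{−1} exists for every λ on C. -/
/-!
Write `b = L - c`. Since the spectrum of `b` lies in the open disc of radius `r`, the spectral radius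
of `b` is less than `r`, and `∑ ‖bⁿ‖ r⁻ⁿ` converges. Hence the Neumann series `(z - L)⁻¹ = ∑ (z - c)⁻ⁿ⁻¹ bⁿ`
converges uniformly on the circle and can be integrated term by term against `e^{-tz}`. By Cauchy's
formula for derivatives the `n`-th term contributes `2πi (-t)ⁿ e^{-tc} / n! • bⁿ`, and these sum to
`2πi e^{-tc} e^{-tb} = 2πi e^{-tL}`.
-/

open Complex Metric NormedSpace Real
open scoped NNReal ENNReal

theorem circleIntegral.hasSum_integral_of_dominated_convergence {E : Type*}
    [NormedAddCommGroup E] [NormedSpace ℂ E] {F : ℕ → ℂ → E} {f : ℂ → E} {bound : ℕ → ℝ}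
    {c : ℂ} {R : ℝ} (hF : ∀ n, CircleIntegrable (F n) c R)
    (h_bound : ∀ n, ∀ z ∈ sphere c |R|, ‖F n z‖ ≤ bound n) (h_summable : Summable bound)
    (h_lim : ∀ z ∈ sphere c |R|, HasSum (fun n => F n z) (f z)) :
    HasSum (fun n => ∮ z in C(c, R), F n z) (∮ z in C(c, R), f z) := by
  refine intervalIntegral.hasSum_integral_of_dominated_convergence (fun n _ => |R| * bound n)
    (fun n => (hF n).out.def'.aestronglyMeasurable)
    (fun n => .of_forall fun θ _ => ?_) (.of_forall fun _ _ => h_summable.mul_left |R|)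
    intervalIntegrable_const
    (.of_forall fun θ _ => (h_lim _ (circleMap_mem_sphere' c R θ)).const_smul _)
  rw [norm_smul, deriv_circleMap, norm_mul, norm_circleMap_zero, norm_I, mul_one]
  exact mul_le_mul_of_nonneg_left (h_bound n _ (circleMap_mem_sphere' c R θ)) (abs_nonneg R)

theorem ContinuousLinearMap.circleIntegral_comp_comm {E F : Type*} [NormedAddCommGroup E]
    [NormedSpace ℂ E] [CompleteSpace E] [NormedAddCommGroup F] [NormedSpace ℂ F]
    [CompleteSpace F] (L : E →L[ℂ] F) {f : ℂ → E} {c : ℂ} {R : ℝ}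
    (hf : CircleIntegrable f c R) :
    ∮ z in C(c, R), L (f z) = L (∮ z in C(c, R), f z) := by
  simp only [circleIntegral, ← L.map_smul]
  exact L.intervalIntegral_comp_comm hf.out

theorem Ring.inverse_one_sub_eq_tsum_pow {α : Type*} [Ring α] [TopologicalSpace α]
    [IsTopologicalRing α] [T2Space α] {x : α} (h : Summable (x ^ ·)) :
    Ring.inverse (1 - x) = ∑' n, x ^ n :=
  Ring.inverse_unit ⟨1 - x, _, h.one_sub_mul_tsum_pow, h.tsum_pow_mul_one_sub⟩

theorem Matrix.resolvent_eq_inv {n R : Type*} [Fintype n] [DecidableEq n] [CommRing R]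
    (L : Matrix n n R) (z : R) : resolvent L z = (z • 1 - L)⁻¹ := by
  rw [resolvent, Algebra.algebraMap_eq_smul_one, Matrix.nonsing_inv_eq_ringInverse]

theorem spectrum.continuousOn_resolvent {𝕜 A : Type*} [NontriviallyNormedField 𝕜] [NormedRing A]
    [NormedAlgebra 𝕜 A] [CompleteSpace A] (a : A) :
    ContinuousOn (resolvent a) (resolventSet 𝕜 a) :=
  fun _ hz => (hasDerivAt_resolvent_const_left hz).continuousAt.continuousWithinAt

section BanachAlgebra

variable {A : Type*} [NormedRing A] [NormedAlgebra ℂ A] [CompleteSpace A]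

theorem NormedSpace.exp_series_sub_algebraMap_hasSum_exp (x : A) (c : ℂ) :
    HasSum (fun n => (cexp c / n.factorial) • (x - algebraMap ℂ A c) ^ n) (exp x) := by
  let +nondep : NormedAlgebra ℚ A := .restrictScalars ℚ ℂ A
  have hsplit : exp x = cexp c • exp (x - algebraMap ℂ A c) := by
    conv_lhs => rw [← sub_add_cancel x (algebraMap ℂ A c)]
    rw [exp_add_of_commute (Algebra.commutes c _).symm, ← algebraMap_exp_comm,
      ← Complex.exp_eq_exp_ℂ, Algebra.smul_def, Algebra.commutes]
  rw [hsplit]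
  simpa [smul_smul, div_eq_mul_inv] using
    (exp_series_hasSum_exp' (𝕂 := ℂ) (x - algebraMap ℂ A c)).const_smul (cexp c)

namespace spectrum

theorem spectralRadius_sub_algebraMap_lt {a : A} {c : ℂ} {r : ℝ≥0} (hr : 0 < r)
    (h : spectrum ℂ a ⊆ ball c r) : spectralRadius ℂ (a - algebraMap ℂ A c) < r := by
  rcases (spectrum ℂ (a - algebraMap ℂ A c)).eq_empty_or_nonempty with hσ | hσ
  · simpa [spectralRadius, hσ] using hr
  refine spectralRadius_lt_of_forall_lt_of_nonempty hσ fun μ hμ => ?_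
  rw [← sub_singleton_eq] at hμ
  obtain ⟨ν, hν, _, rfl, rfl⟩ := hμ
  simpa [← NNReal.coe_lt_coe, dist_eq_norm] using h hν

/- `z ↦ (1 - z • b)⁻¹` is holomorphic on the disc of radius `ρ(b)⁻¹`, so its power series
`∑ zⁿ bⁿ` has at least that radius of convergence. -/
theorem summable_norm_pow_mul_pow {b : A} {s : ℝ≥0}
    (hs : (s : ℝ≥0∞) < (spectralRadius ℂ b)⁻¹) : Summable fun n => ‖b ^ n‖ * s ^ n := by
  obtain ⟨s', hss', hs'⟩ := ENNReal.lt_iff_exists_nnreal_btwn.mp hs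
  have hs'_pos : 0 < s' := ENNReal.coe_pos.mp (zero_le.trans_lt hss')
  have hf := (differentiableOn_inverse_one_sub_smul hs').hasFPowerSeriesOnBall hs'_pos
  have hp := (hasFPowerSeriesOnBall_inverse_one_sub_smul ℂ b).exchange_radius hf
  simpa [ContinuousMultilinearMap.norm_mkPiRing] using
    FormalMultilinearSeries.summable_norm_mul_pow _ (hss'.trans_le hp.r_le)

theorem hasSum_resolvent_of_spectralRadius_lt {a : A} {c z : ℂ}
    (h : spectralRadius ℂ (a - algebraMap ℂ A c) < ‖z - c‖₊) :
    HasSum (fun n => (z - c)⁻¹ ^ (n + 1) • (a - algebraMap ℂ A c) ^ n) (resolvent a z) := by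
  set b := a - algebraMap ℂ A c
  have hw : z - c ≠ 0 := by
    rintro hw
    simp [hw] at h
  set w := Units.mk0 (z - c) hw
  have hsum : Summable fun n => ((z - c)⁻¹ • b) ^ n := by
    refine Summable.of_norm ?_
    have hs : ((‖z - c‖₊⁻¹ : ℝ≥0) : ℝ≥0∞) < (spectralRadius ℂ b)⁻¹ := by
      rwa [ENNReal.coe_inv (by simpa using hw), ENNReal.inv_lt_inv]
    refine (summable_norm_pow_mul_pow hs).congr fun n => ?_
    simp [smul_pow, norm_smul, mul_comm]
  have hres : resolvent a z = (z - c)⁻¹ • ∑' n, ((z - c)⁻¹ • b) ^ n := by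
    rw [← Ring.inverse_one_sub_eq_tsum_pow hsum]
    calc resolvent a z = resolvent b (z - c) := by
          simp only [resolvent, b, map_sub, sub_sub_sub_cancel_right]
      _ = (z - c)⁻¹ • (w • resolvent b (w : ℂ)) := by simp [w, smul_smul, hw]
      _ = (z - c)⁻¹ • Ring.inverse (1 - (z - c)⁻¹ • b) := by
          rw [units_smul_resolvent_self]
          simp [resolvent, w, Units.smul_def]
  rw [hres]
  convert hsum.hasSum.const_smul (z - c)⁻¹ using 1
  ext n
  rw [smul_pow, smul_smul, pow_succ']

theorem hasSum_circleIntegral_smul_resolvent {f : ℂ → ℂ} {a : A} {c : ℂ} {r : ℝ} (hr : 0 < r)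
    (hf : DifferentiableOn ℂ f (closedBall c r)) (ha : spectrum ℂ a ⊆ ball c r) :
    HasSum (fun n => (2 * π * I / n.factorial * iteratedDeriv n f c) • (a - algebraMap ℂ A c) ^ n)
      (∮ z in C(c, r), f z • resolvent a z) := by
  lift r to ℝ≥0 using hr.le
  set b := a - algebraMap ℂ A c
  have hρ : spectralRadius ℂ b < r := spectralRadius_sub_algebraMap_lt (mod_cast hr) ha
  have hb : Summable fun n => ‖b ^ n‖ * r⁻¹ ^ n := by
    refine summable_norm_pow_mul_pow ?_
    rwa [ENNReal.coe_inv (mod_cast hr.ne'), ENNReal.inv_lt_inv]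
  have hf_sphere := hf.continuousOn.mono sphere_subset_closedBall
  obtain ⟨M, hM⟩ := (isCompact_sphere c r).exists_bound_of_continuousOn hf_sphere
  have hinv : ContinuousOn (fun z => (z - c)⁻¹) (sphere c r) :=
    (continuousOn_id.sub continuousOn_const).inv₀
      fun z hz => sub_ne_zero.2 (ne_of_mem_sphere hz (mod_cast hr.ne'))
  have hcauchy : ∀ n, (∮ z in C(c, r), f z • (z - c)⁻¹ ^ (n + 1) • b ^ n) =
      (2 * π * I / n.factorial * iteratedDeriv n f c) • b ^ n := by
    intro n
    simp_rw [smul_smul, circleIntegral.integral_smul_const]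
    rw [← smul_eq_mul (a := 2 * π * I / n.factorial),
      ← hf.circleIntegral_one_div_sub_center_pow_smul (mod_cast hr) n]
    simp [mul_comm, inv_pow]
  simp_rw [← hcauchy]
  refine circleIntegral.hasSum_integral_of_dominated_convergence
    (bound := fun n => M * (‖b ^ n‖ * r⁻¹ ^ n * r⁻¹))
    (fun n => ContinuousOn.circleIntegrable r.2 ?_) (fun n z hz => ?_)
    ((hb.mul_right _).mul_left M) (fun z hz => ?_)
  · exact hf_sphere.smul ((hinv.pow _).smul continuousOn_const)
  · have hz' : ‖z - c‖ = r := by simpa [dist_eq_norm] using hz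
    calc ‖f z • (z - c)⁻¹ ^ (n + 1) • b ^ n‖ = ‖f z‖ * (‖b ^ n‖ * r⁻¹ ^ n * r⁻¹) := by
          rw [norm_smul, norm_smul, norm_pow, norm_inv, hz', NNReal.coe_inv]
          ring
      _ ≤ M * (‖b ^ n‖ * r⁻¹ ^ n * r⁻¹) := by
          gcongr
          exact hM z (by simpa using hz)
  · have hz' : ‖z - c‖₊ = r := by ext; simpa [dist_eq_norm] using hz
    exact (hasSum_resolvent_of_spectralRadius_lt (hz' ▸ hρ)).const_smul (f z)

theorem circleIntegral_cexp_smul_resolvent {a : A} {c : ℂ} {r : ℝ} (hr : 0 < r)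
    (ha : spectrum ℂ a ⊆ ball c r) (t : ℂ) :
    ∮ z in C(c, r), cexp (-(t * z)) • resolvent a z = (2 * π * I) • exp (-(t • a)) := by
  have hf : Differentiable ℂ fun z => cexp (-t * z) := by fun_prop
  simp_rw [neg_mul_eq_neg_mul t]
  refine (hasSum_circleIntegral_smul_resolvent hr hf.differentiableOn ha).unique ?_
  convert (exp_series_sub_algebraMap_hasSum_exp (-(t • a)) (-t * c)).const_smul
    (2 * π * I) using 1
  ext n
  have hshift : -(t • a) - algebraMap ℂ A (-t * c) = (-t) • (a - algebraMap ℂ A c) := by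
    rw [map_mul, ← Algebra.smul_def]
    module
  rw [iteratedDeriv_cexp_const_mul, hshift, smul_pow, smul_smul, smul_smul]
  congr 1
  ring

end spectrum

end BanachAlgebra

/-- Let `L` be an `N × N` complex matrix and `C` the positively oriented
circle of center `c` and radius `r > 0` whose open interior contains all eigenvalues of `L`.
Then `(λ I - L)⁻¹` exists for every `λ` on `C`, and for every `t ∈ ℝ` the matrix exponential
satisfies, entrywise, `exp(-t L) = (1/(2πi)) ∮_C e^{-tλ} (λ I - L)⁻¹ dλ`. -/
theorem matrix_exp_eq_contour_integral_of_resolvent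
    (N : ℕ) (L : Matrix (Fin N) (Fin N) ℂ)
    (c : ℂ) (r : ℝ) (hr : 0 < r)
    (hspec : ∀ μ ∈ spectrum ℂ L, ‖μ - c‖ < r) :
    (∀ z ∈ Metric.sphere c r, IsUnit (z • (1 : Matrix (Fin N) (Fin N) ℂ) - L)) ∧
    ∀ t : ℝ, ∀ i j : Fin N,
      (NormedSpace.exp (-((t : ℂ) • L))) i j =
        (1 / (2 * Real.pi * Complex.I)) *
          ∮ z in C(c, r),
            Complex.exp (-(t * z)) * ((z • (1 : Matrix (Fin N) (Fin N) ℂ) - L)⁻¹ i j) := by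
  have hball : spectrum ℂ L ⊆ ball c r := fun μ hμ => mem_ball_iff_norm.2 (hspec μ hμ)
  have hsphere : sphere c r ⊆ resolventSet ℂ L := fun z hz => of_not_not fun hσ =>
    sphere_disjoint_ball.ne_of_mem hz (hball hσ) rfl
  refine ⟨fun z hz => ?_, fun t i j => ?_⟩
  · simpa [Algebra.algebraMap_eq_smul_one] using spectrum.mem_resolventSet_iff.mp (hsphere hz)
  -- `exp` and circle integrals only depend on the topology, so any Banach-algebra norm will do.
  let : NormedRing (Matrix (Fin N) (Fin N) ℂ) := Matrix.linftyOpNormedRing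
  let : NormedAlgebra ℂ (Matrix (Fin N) (Fin N) ℂ) := Matrix.linftyOpNormedAlgebra
  let entry := (Matrix.entryLinearMap ℂ ℂ i j).toContinuousLinearMap
  have hint : CircleIntegrable (fun z => cexp (-(t * z)) • resolvent L z) c r :=
    ((by fun_prop : Continuous fun z : ℂ => cexp (-(t * z))).continuousOn.fun_smul
      ((spectrum.continuousOn_resolvent L).mono hsphere)).circleIntegrable hr.le
  have key : ∮ z in C(c, r), cexp (-(t * z)) * resolvent L z i j =
      2 * π * I * exp (-((t : ℂ) • L)) i j :=
    (entry.circleIntegral_comp_comm hint).trans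
      (congrArg entry (spectrum.circleIntegral_cexp_smul_resolvent hr hball t))
  simp_rw [← Matrix.resolvent_eq_inv, key]
  field_simp
end
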